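/- arXiv:math/0601615 — 4 statements merged into one kernel-verified Lean document; each statement's English description precedes it below -/
import Mathlib

section
/- Let λ/μ be a right-aligned skew Ferrers matrix of size n×n. Then the set 𝔖(λ/μ) of rook configurations on λ/μ with n rooks, viewed as a set of permutations of S_n, is a lower order ideal in the Bruhat order on S_n; that is, if ρ ∈ 𝔖(λ/μ) and σ ≤ ρ in Bruhat order, then σ ∈ 𝔖(λ/μ). -/
open Finset

/-- A board: the set of one-entries (cells) of a zero-one matrix, as (row, column) pairs. -/
abbrev Board := Finset (ℕ × ℕ)

/-- The full `m × n` grid of cells. -/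
def grid (m n : ℕ) : Board := Finset.range m ×ˢ Finset.range n

/-- The (non-taking) rook configurations on the board `A` with `k` rooks. -/
def rookConfigs (A : Board) (k : ℕ) : Finset Board :=
  A.powerset.filter fun C =>
    C.card = k ∧ ∀ c ∈ C, ∀ c' ∈ C, c ≠ c' → c.1 ≠ c'.1 ∧ c.2 ≠ c'.2

/-- `invStat m n C`: the number of (not necessarily positive) cells of an `m × n` matrix
having no rook of the configuration `C` weakly to the right in the same row nor weakly
below in the same column. -/
def invStat (m n : ℕ) (C : Board) : ℕ :=
  ((grid m n).filter fun a =>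
    (∀ c ∈ C, c.1 = a.1 → c.2 < a.2) ∧ (∀ c ∈ C, c.2 = a.2 → c.1 < a.1)).card

/-- The `k`-th `q`-rook number of a board `A` of ambient matrix size `m × n`. -/
def qRook {F : Type*} [CommSemiring F] (q : F) (m n : ℕ) (A : Board) (k : ℕ) : F :=
  ∑ C ∈ rookConfigs A k, q ^ invStat m n C

/-- The `q`-analogue `[x]_q = 1 + q + ⋯ + q^(x-1)`. -/
def qInt {F : Type*} [CommSemiring F] (q : F) (x : ℕ) : F := ∑ i ∈ Finset.range x, q ^ i

/-- The `q`-factorial `[n]!_q = [1]_q [2]_q ⋯ [n]_q`. -/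
def qFact {F : Type*} [CommSemiring F] (q : F) (n : ℕ) : F := ∏ i ∈ Finset.range n, qInt q (i + 1)

/-- The `q`-Stirling numbers `S_{n,k}(q)` of Garsia and Remmel. -/
def qStirling {F : Type*} [CommSemiring F] (q : F) : ℕ → ℕ → F
  | 0, 0 => 1
  | 0, _ + 1 => 0
  | n + 1, k => (if k = 0 then 0 else q ^ (k - 1) * qStirling q n (k - 1)) + qInt q k * qStirling q n k

/-- Stirling numbers of the second kind. -/
def stirling2 : ℕ → ℕ → ℕ
  | 0, 0 => 1
  | 0, _ + 1 => 0
  | n + 1, k => (if k = 0 then 0 else stirling2 n (k - 1)) + k * stirling2 n k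

/-- The board `A` covers the rook configuration of the permutation `π`
(a rook at `(i, π i)` for every row `i`, zero-indexed). -/
def Covers {n : ℕ} (A : Board) (π : Equiv.Perm (Fin n)) : Prop :=
  ∀ i : Fin n, ((i : ℕ), (π i : ℕ)) ∈ A

/-- `bruhatRank π i j` is the number of rooks of `π` weakly north-east of cell `(i,j)`,
i.e. `|{a ≤ i : π a ≥ j}|`. -/
def bruhatRank {n : ℕ} (π : Equiv.Perm (Fin n)) (i j : Fin n) : ℕ :=
  (Finset.univ.filter fun a : Fin n => a ≤ i ∧ j ≤ π a).card

/-- Bruhat order on the symmetric group, via the standard (Ehresmann) rank criterion. -/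
def BruhatLE {n : ℕ} (u w : Equiv.Perm (Fin n)) : Prop :=
  ∀ i j : Fin n, bruhatRank u i j ≤ bruhatRank w i j


instance {n : ℕ} (A : Board) (π : Equiv.Perm (Fin n)) : Decidable (Covers A π) :=
  inferInstanceAs (Decidable (∀ i : Fin n, ((i : ℕ), (π i : ℕ)) ∈ A))

instance {n : ℕ} (u w : Equiv.Perm (Fin n)) : Decidable (BruhatLE u w) :=
  inferInstanceAs (Decidable (∀ i j : Fin n, bruhatRank u i j ≤ bruhatRank w i j))

/-- The number of inversions of a permutation (= its Coxeter length). -/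
def inversions {n : ℕ} (π : Equiv.Perm (Fin n)) : ℕ :=
  (Finset.univ.filter fun p : Fin n × Fin n => p.1 < p.2 ∧ π p.2 < π p.1).card

/-- A right-aligned Ferrers matrix inside the `n × n` grid: every one-entry has one-entries
(weakly) to its right in the grid and above it. -/
def IsRightFerrers (n : ℕ) (A : Board) : Prop :=
  A ⊆ grid n n ∧ ∀ i j i' j' : ℕ, (i, j) ∈ A → i' ≤ i → j ≤ j' → j' < n → (i', j') ∈ A

/-- A left-aligned Ferrers matrix inside the `n × n` grid. -/
def IsLeftFerrers (n : ℕ) (A : Board) : Prop :=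
  A ⊆ grid n n ∧ ∀ i j i' j' : ℕ, (i, j) ∈ A → i' ≤ i → j' ≤ j → (i', j') ∈ A

/-- A right-aligned skew Ferrers matrix: an entrywise difference `λ - μ` of right-aligned
Ferrers matrices with `μ ≤ λ`. -/
def IsRightSkewFerrers (n : ℕ) (B : Board) : Prop :=
  ∃ L M : Board, IsRightFerrers n L ∧ IsRightFerrers n M ∧ M ⊆ L ∧ B = L \ M

/-- A left-aligned skew Ferrers matrix. -/
def IsLeftSkewFerrers (n : ℕ) (B : Board) : Prop :=
  ∃ L M : Board, IsLeftFerrers n L ∧ IsLeftFerrers n M ∧ M ⊆ L ∧ B = L \ M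

/-- `H` is the right hull of `π`: the smallest right-aligned skew Ferrers matrix covering `π`. -/
def IsRightHull {n : ℕ} (π : Equiv.Perm (Fin n)) (H : Board) : Prop :=
  IsRightSkewFerrers n H ∧ Covers H π ∧
    ∀ B : Board, IsRightSkewFerrers n B → Covers B π → H ⊆ B

/-- `H` is the left hull of `π`: the smallest left-aligned skew Ferrers matrix covering `π`. -/
def IsLeftHull {n : ℕ} (π : Equiv.Perm (Fin n)) (H : Board) : Prop :=
  IsLeftSkewFerrers n H ∧ Covers H π ∧
    ∀ B : Board, IsLeftSkewFerrers n B → Covers B π → H ⊆ B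

/-- `π` contains the pattern `σ`. -/
def ContainsPattern {n m : ℕ} (π : Equiv.Perm (Fin n)) (σ : Equiv.Perm (Fin m)) : Prop :=
  ∃ f : Fin m → Fin n, StrictMono f ∧ ∀ a b : Fin m, σ a < σ b ↔ π (f a) < π (f b)

/-- The pattern 4231 (one-line notation, here zero-indexed). -/
def p4231 : Equiv.Perm (Fin 4) := ⟨![3,1,2,0], ![3,1,2,0], by decide, by decide⟩
/-- The pattern 35142. -/
def p35142 : Equiv.Perm (Fin 5) := ⟨![2,4,0,3,1], ![2,4,0,3,1], by decide, by decide⟩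
/-- The pattern 42513. -/
def p42513 : Equiv.Perm (Fin 5) := ⟨![3,1,4,0,2], ![3,1,4,0,2], by decide, by decide⟩
/-- The pattern 351624. -/
def p351624 : Equiv.Perm (Fin 6) := ⟨![2,4,0,5,1,3], ![2,4,0,5,1,3], by decide, by decide⟩

/-- `π` avoids the four patterns 4231, 35142, 42513 and 351624. -/
def AvoidsThePatterns {n : ℕ} (π : Equiv.Perm (Fin n)) : Prop :=
  ¬ ContainsPattern π p4231 ∧ ¬ ContainsPattern π p35142 ∧
    ¬ ContainsPattern π p42513 ∧ ¬ ContainsPattern π p351624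

/-- Rotating an `m × n` board by 180 degrees. -/
def rot180 (m n : ℕ) (A : Board) : Board := A.image fun c => (m - 1 - c.1, n - 1 - c.2)

/-- Flipping an `m`-row board upside down. -/
def flipud (m : ℕ) (A : Board) : Board := A.image fun c => (m - 1 - c.1, c.2)

/-- The block matrix `B # A` with `B` (of size `nB × nB`) in the top-left corner, `A`
(of size `mA × mA`) in the bottom-right corner, and all-ones off-diagonal blocks. -/
def blockSharp (nB mA : ℕ) (B A : Board) : Board :=
  B ∪ Finset.range nB ×ˢ Finset.Ico nB (nB + mA) ∪ Finset.Ico nB (nB + mA) ×ˢ Finset.range nB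
    ∪ A.image fun c => (c.1 + nB, c.2 + nB)

/-- The 180-degree rotation of a permutation of `Fin n`: `π^↻ (i) = n - 1 - π (n - 1 - i)`. -/
def rot180Perm {n : ℕ} (π : Equiv.Perm (Fin n)) : Equiv.Perm (Fin n) :=
  (Fin.revPerm.trans π).trans Fin.revPerm

/-- The statistic `neg(π) = |{i ∈ [n+1, 2n] : π i ≤ n}|` (one-indexed) on `S_{2n}`. -/
def negStat (n : ℕ) (π : Equiv.Perm (Fin (2 * n))) : ℕ :=
  (Finset.univ.filter fun i : Fin (2 * n) => n ≤ (i : ℕ) ∧ (π i : ℕ) < n).card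

/-- `RB^M (q, t) = Σ_{π ∈ 𝔖ₙᴮ ∩ 𝔖(M)} q^{inv π} t^{neg π}` over rotationally symmetric
permutations of `S_{2n}` covered by the `2n × 2n` board `M`. -/
def RB {F : Type*} [CommSemiring F] (q t : F) (n : ℕ) (M : Board) : F :=
  ∑ π ∈ Finset.univ.filter fun π : Equiv.Perm (Fin (2 * n)) => rot180Perm π = π ∧ Covers M π,
    q ^ inversions π * t ^ negStat n π

/-- The triangular board `T_m` with ones on and above the secondary diagonal. -/
def Tboard (m : ℕ) : Board := (grid m m).filter fun c => c.1 + c.2 < m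

/-!
Right-aligned Ferrers boards are closed under moving a cell up or right. If `σ ≤ ρ` in Bruhat
order and a rook `(i, σ i)` sat in `μ`, the rank inequality at `(i, σ i)` would give a rook of
`ρ` weakly north-east of it, hence in `μ`. If it sat outside `λ`, every rook of `ρ` in rows
`≥ i` would lie strictly east of column `σ i`; by the complementary form of the rank criterion
(counting rooks south-west instead of north-east) `σ` can then have no rook there either,
yet `(i, σ i)` is one.
-/

namespace Equiv.Perm

variable {n : ℕ}

/-- `rankAbove π (i + 1) j = bruhatRank π i j`; the `ℕ`-indexed, row-strict form also covers the
boundary values `i = 0` and `j = n`. -/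
def rankAbove (π : Perm (Fin n)) (i j : ℕ) : ℕ :=
  #{a : Fin n | (a : ℕ) < i ∧ j ≤ (π a : ℕ)}

def rankBelow (π : Perm (Fin n)) (i j : ℕ) : ℕ :=
  #{a : Fin n | i ≤ (a : ℕ) ∧ (π a : ℕ) < j}

theorem card_filter_apply_lt (π : Perm (Fin n)) {j : ℕ} (hj : j ≤ n) :
    #{a : Fin n | (π a : ℕ) < j} = j := by
  rw [card_equiv π (t := {b : Fin n | (b : ℕ) < j}) (by simp), Fin.card_filter_val_lt,
    min_eq_right hj]

theorem rankAbove_add_eq_rankBelow_add (π : Perm (Fin n)) {i j : ℕ} (hi : i ≤ n) (hj : j ≤ n) :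
    rankAbove π i j + j = rankBelow π i j + i := by
  have hrows := card_filter_add_card_filter_not (s := {a : Fin n | (a : ℕ) < i})
    (fun a => j ≤ (π a : ℕ))
  have hcols := card_filter_add_card_filter_not (s := {a : Fin n | (π a : ℕ) < j})
    (fun a => i ≤ (a : ℕ))
  rw [Fin.card_filter_val_lt, min_eq_right hi] at hrows
  rw [card_filter_apply_lt π hj] at hcols
  simp only [rankAbove, rankBelow, filter_filter, not_le, and_comm] at hrows hcols ⊢
  omega

theorem rankAbove_le_of_bruhatLE {σ ρ : Perm (Fin n)} (h : BruhatLE σ ρ) {i : ℕ} (hi : i ≤ n)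
    (j : ℕ) : rankAbove σ i j ≤ rankAbove ρ i j := by
  rcases i with _ | i
  · simp [rankAbove]
  by_cases hj : j < n
  · have key (π : Perm (Fin n)) : rankAbove π (i + 1) j = bruhatRank π ⟨i, hi⟩ ⟨j, hj⟩ := by
      simp only [rankAbove, bruhatRank, Fin.le_def, Nat.lt_succ_iff]
    rw [key, key]
    exact h _ _
  · have rankAbove_eq_zero (π : Perm (Fin n)) : rankAbove π (i + 1) j = 0 := by
      simp only [rankAbove, card_eq_zero, filter_eq_empty_iff]
      intro a _ ha
      have := (π a).isLt
      omega
    rw [rankAbove_eq_zero, rankAbove_eq_zero]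

theorem rankBelow_le_of_bruhatLE {σ ρ : Perm (Fin n)} (h : BruhatLE σ ρ) {i j : ℕ} (hi : i ≤ n)
    (hj : j ≤ n) : rankBelow σ i j ≤ rankBelow ρ i j := by
  have := rankAbove_le_of_bruhatLE h hi j
  have := rankAbove_add_eq_rankBelow_add σ hi hj
  have := rankAbove_add_eq_rankBelow_add ρ hi hj
  omega

end Equiv.Perm

section RightFerrers

variable {n : ℕ} {A : Board} {σ ρ : Equiv.Perm (Fin n)}

theorem IsRightFerrers.covers_of_bruhatLE (hA : IsRightFerrers n A) (hσρ : BruhatLE σ ρ)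
    (hρ : Covers A ρ) : Covers A σ := by
  intro i
  by_contra hi
  have hρ_right : ∀ a : Fin n, (i : ℕ) ≤ a → (σ i : ℕ) < ρ a := fun a ha =>
    lt_of_not_ge fun hle => hi (hA.2 _ _ _ _ (hρ a) ha hle (σ i).isLt)
  have hρ_zero : ρ.rankBelow i (σ i + 1) = 0 := by
    simp only [Equiv.Perm.rankBelow, card_eq_zero, filter_eq_empty_iff]
    intro a _ ha
    have := hρ_right a ha.1
    omega
  have hσ_pos : 0 < σ.rankBelow i (σ i + 1) := card_pos.mpr ⟨i, by simp⟩
  have := Equiv.Perm.rankBelow_le_of_bruhatLE hσρ (j := σ i + 1) i.isLt.le (σ i).isLt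
  omega

theorem IsRightFerrers.avoids_of_bruhatLE (hA : IsRightFerrers n A) (hσρ : BruhatLE σ ρ)
    (hρ : ∀ a : Fin n, ((a : ℕ), (ρ a : ℕ)) ∉ A) (i : Fin n) : ((i : ℕ), (σ i : ℕ)) ∉ A := by
  intro hi
  have hσ_pos : 0 < bruhatRank σ i (σ i) := card_pos.mpr ⟨i, by simp⟩
  obtain ⟨a, ha⟩ := card_pos.mp (hσ_pos.trans_le (hσρ i (σ i)))
  simp only [mem_filter, mem_univ, true_and] at ha
  exact hρ a (hA.2 _ _ _ _ hi ha.1 ha.2 (ρ a).isLt)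

end RightFerrers

theorem skew_ferrers_order_ideal_general (n : ℕ) (L M : Board)
    (hL : IsRightFerrers n L) (hM : IsRightFerrers n M)
    (ρ σ : Equiv.Perm (Fin n)) (hρ : Covers (L \ M) ρ) (hσρ : BruhatLE σ ρ) :
    Covers (L \ M) σ := by
  simp only [Covers, mem_sdiff, forall_and] at hρ ⊢
  exact ⟨hL.covers_of_bruhatLE hσρ hρ.1, hM.avoids_of_bruhatLE hσρ hρ.2⟩

/-- If `λ/μ` is a right-aligned skew Ferrers matrix of size `n × n`, then the
set `𝔖(λ/μ)` of `n`-rook configurations on `λ/μ` (viewed as a set of permutations of `S_n`) is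
a lower order ideal in the Bruhat order on `S_n`. -/
theorem skew_ferrers_order_ideal (n : ℕ) (L M : Board)
    (hL : IsRightFerrers n L) (hM : IsRightFerrers n M) (hML : M ⊆ L)
    (ρ σ : Equiv.Perm (Fin n)) (hρ : Covers (L \ M) ρ) (hσρ : BruhatLE σ ρ) :
    Covers (L \ M) σ :=
  skew_ferrers_order_ideal_general n L M hL hM ρ σ hρ hσρ
end

section
/- Let u, w ∈ S_n and suppose that both w and u^↕ avoid the patterns 4231, 35142, 42513, and 351624 (where u^↕(i) = u(n−i+1)). Then the Poincaré polynomial of the Bruhat interval [u,w], Poin_{[u,w]}(q) = Σ_{v ∈ [u,w]} q^{ℓ(v)} (where ℓ is the number of inversions), equals the n-th q-rook number R_n^{H_R(w) ∩ H_L(u)}(q) of the board H_R(w) ∩ H_L(u). -/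
open Finset

/-!
Both hulls have explicit descriptions: a cell lies in `H_R(w)` iff some rook of `w` is weakly
north-east of it and some rook of `w` weakly south-west of it, and dually for `H_L(u)`. So the
`n`-rook configurations on `H_R(w) ∩ H_L(u)` are the permutation matrices covered by both hulls,
and `inv` of a permutation matrix is the inversion number.

By Ehresmann's rank criterion, `v ≤ w` implies that `v` is covered by `H_R(w)`. Conversely, if `v`
is covered by `H_R(w)`, the rank inequality for `v` and `w` at a cell can be pushed to a
neighbouring cell, decreasing the rank of `w` or moving towards the south-west boundary, unless
`w` has a corner configuration near that cell; every such configuration contains one of the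
patterns 4231, 35142, 42513, 351624. Reversing the order of the rows turns `H_L(u)` into
`H_R(u^↕)` and reverses the Bruhat order, which handles the condition `u ≤ v`.
-/

open Equiv

section

variable {n : ℕ}

-- ℕ-indexed, unlike `bruhatRank π i j = neRank π (i + 1) j`, so that rows and columns may take
-- the boundary values `0` and `n`.
def neRank (π : Perm (Fin n)) (i j : ℕ) : ℕ := #{a : Fin n | (a : ℕ) < i ∧ j ≤ π a}

def swRank (π : Perm (Fin n)) (i j : ℕ) : ℕ := #{b : Fin n | i ≤ (b : ℕ) ∧ π b < j}

section Rank

variable (π : Perm (Fin n))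

lemma card_apply_lt {j : ℕ} (hj : j ≤ n) : #{a : Fin n | π a < j} = j := by
  rw [card_equiv π (t := {b : Fin n | b < j}) (by simp), Fin.card_filter_val_lt, min_eq_right hj]

lemma neRank_add_eq {i j : ℕ} (hi : i ≤ n) (hj : j ≤ n) :
    neRank π i j + j = i + swRank π i j := by
  have hrows := card_filter_add_card_filter_not (s := {a : Fin n | (a : ℕ) < i})
    (fun a => j ≤ (π a : ℕ))
  have hcols := card_filter_add_card_filter_not (s := {a : Fin n | π a < j})
    (fun a => (a : ℕ) < i)
  simp only [filter_filter, Fin.card_filter_val_lt, min_eq_right hi, card_apply_lt π hj, not_le,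
    not_lt] at hrows hcols
  have hswap : #{a : Fin n | (a : ℕ) < i ∧ π a < j} = #{a : Fin n | π a < j ∧ (a : ℕ) < i} := by
    simp_rw [and_comm]
  have hswap' : #{a : Fin n | π a < j ∧ i ≤ (a : ℕ)} = swRank π i j := by
    simp_rw [swRank, and_comm]
  unfold neRank
  omega

lemma card_le_apply {j : ℕ} (hj : j ≤ n) : #{a : Fin n | j ≤ π a} = n - j := by
  have := card_filter_add_card_filter_not (s := univ) (fun a : Fin n => (π a : ℕ) < j)
  simp only [card_apply_lt π hj, not_lt, card_univ, Fintype.card_fin] at this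
  omega

lemma neRank_pos_iff {i j : ℕ} : 0 < neRank π i j ↔ ∃ a : Fin n, (a : ℕ) < i ∧ j ≤ π a := by
  simp [neRank, card_pos, filter_nonempty_iff]

lemma swRank_pos_iff {i j : ℕ} : 0 < swRank π i j ↔ ∃ b : Fin n, i ≤ (b : ℕ) ∧ π b < j := by
  simp [swRank, card_pos, filter_nonempty_iff]

lemma neRank_eq_zero_of_le {i j : ℕ} (hj : n ≤ j) : neRank π i j = 0 :=
  card_eq_zero.2 <| filter_eq_empty_iff.2 fun a _ => by omega

lemma neRank_zero_left (j : ℕ) : neRank π 0 j = 0 :=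
  card_eq_zero.2 <| filter_eq_empty_iff.2 fun a _ => by omega

lemma swRank_zero_right (i : ℕ) : swRank π i 0 = 0 :=
  card_eq_zero.2 <| filter_eq_empty_iff.2 fun a _ => by omega

lemma swRank_eq_zero_of_le {i : ℕ} (hi : n ≤ i) (j : ℕ) : swRank π i j = 0 :=
  card_eq_zero.2 <| filter_eq_empty_iff.2 fun a _ => by omega

lemma neRank_mono_left {i i' : ℕ} (h : i ≤ i') (j : ℕ) : neRank π i j ≤ neRank π i' j :=
  card_le_card fun a ha => by simp only [mem_filter_univ] at ha ⊢; omega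

lemma neRank_anti_right (i : ℕ) {j j' : ℕ} (h : j ≤ j') : neRank π i j' ≤ neRank π i j :=
  card_le_card fun a ha => by simp only [mem_filter_univ] at ha ⊢; omega

lemma neRank_succ_left_le (i j : ℕ) : neRank π (i + 1) j ≤ neRank π i j + 1 := by
  have hsub : neRank π (i + 1) j ≤ #{a : Fin n | ((a : ℕ) < i ∧ j ≤ π a) ∨ (a : ℕ) = i} :=
    card_le_card fun a ha => by simp only [mem_filter_univ] at ha ⊢; omega
  have hrow : #{a : Fin n | (a : ℕ) = i} ≤ 1 :=
    card_le_one.2 fun a ha b hb => by simp only [mem_filter_univ] at ha hb; omega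
  rw [filter_or] at hsub
  exact hsub.trans ((card_union_le _ _).trans (Nat.add_le_add_left hrow _))

lemma neRank_le_succ_right_add_one (i j : ℕ) : neRank π i j ≤ neRank π i (j + 1) + 1 := by
  have hsub : neRank π i j ≤ #{a : Fin n | ((a : ℕ) < i ∧ j + 1 ≤ π a) ∨ (π a : ℕ) = j} :=
    card_le_card fun a ha => by simp only [mem_filter_univ] at ha ⊢; omega
  have hcol : #{a : Fin n | (π a : ℕ) = j} ≤ 1 :=
    card_le_one.2 fun a ha b hb => by
      simp only [mem_filter_univ] at ha hb
      exact π.injective (by omega)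
  rw [filter_or] at hsub
  exact hsub.trans ((card_union_le _ _).trans (Nat.add_le_add_left hcol _))

lemma neRank_lt_succ_left {r : Fin n} {j : ℕ} (h : j ≤ π r) :
    neRank π r j < neRank π (r + 1) j := by
  refine card_lt_card ((ssubset_iff_of_subset fun a ha => ?_).2 ⟨r, ?_, ?_⟩) <;>
    simp only [mem_filter_univ] at * <;> omega

lemma neRank_succ_right_lt {r : Fin n} {i : ℕ} (h : r < i) :
    neRank π i (π r + 1) < neRank π i (π r) := by
  refine card_lt_card ((ssubset_iff_of_subset fun a ha => ?_).2 ⟨r, ?_, ?_⟩) <;>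
    simp only [mem_filter_univ] at * <;> omega

lemma neRank_succ_left_of_lt {r : Fin n} {j : ℕ} (h : π r < j) :
    neRank π (r + 1) j = neRank π r j := by
  unfold neRank
  congr 1
  refine filter_congr fun a _ => ⟨fun ha => ⟨?_, ha.2⟩, fun ha => ⟨by omega, ha.2⟩⟩
  have : a ≠ r := by rintro rfl; omega
  omega

lemma neRank_succ_right_of_forall_ne {i j : ℕ} (h : ∀ a : Fin n, (a : ℕ) < i → (π a : ℕ) ≠ j) :
    neRank π i (j + 1) = neRank π i j := by
  unfold neRank
  congr 1
  refine filter_congr fun a _ => ⟨fun ha => ⟨ha.1, by omega⟩, fun ha => ⟨ha.1, ?_⟩⟩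
  have := h a ha.1
  omega

end Rank

lemma bruhatRank_eq_neRank (π : Perm (Fin n)) (i j : Fin n) :
    bruhatRank π i j = neRank π (i + 1) j := by
  unfold bruhatRank neRank
  congr 1
  exact filter_congr fun a _ => by omega

lemma bruhatLE_iff_neRank_le {u v : Perm (Fin n)} :
    BruhatLE u v ↔ ∀ i j : ℕ, i ≤ n → j ≤ n → neRank u i j ≤ neRank v i j := by
  refine ⟨fun h i j hi hj => ?_, fun h i j => by
    simpa only [bruhatRank_eq_neRank] using h (i + 1) j i.is_lt j.is_lt.le⟩
  rcases Nat.eq_zero_or_pos i with rfl | hi0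
  · simp [neRank_zero_left]
  rcases hj.lt_or_eq with hj | rfl
  · simpa [bruhatRank_eq_neRank, Nat.sub_add_cancel hi0] using h ⟨i - 1, by omega⟩ ⟨j, hj⟩
  · simp [neRank_eq_zero_of_le]

lemma mem_grid {m k : ℕ} {c : ℕ × ℕ} : c ∈ grid m k ↔ c.1 < m ∧ c.2 < k := by
  simp [grid]

def rightHull (w : Perm (Fin n)) : Board :=
  (grid n n).filter fun c =>
    (∃ a : Fin n, (a : ℕ) ≤ c.1 ∧ c.2 ≤ w a) ∧ ∃ b : Fin n, c.1 ≤ b ∧ (w b : ℕ) ≤ c.2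

def leftHull (u : Perm (Fin n)) : Board :=
  (grid n n).filter fun c =>
    (∃ a : Fin n, (a : ℕ) ≤ c.1 ∧ (u a : ℕ) ≤ c.2) ∧ ∃ b : Fin n, c.1 ≤ b ∧ c.2 ≤ u b

lemma rightHull_subset_grid (w : Perm (Fin n)) : rightHull w ⊆ grid n n := filter_subset _ _

lemma covers_rightHull_iff {w v : Perm (Fin n)} :
    Covers (rightHull w) v ↔ ∀ i : Fin n, (∃ a, a ≤ i ∧ v i ≤ w a) ∧ ∃ b, i ≤ b ∧ w b ≤ v i := by
  simp only [Covers, rightHull, mem_filter, mem_grid, Fin.is_lt, true_and, Fin.le_def]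

lemma covers_leftHull_iff {u v : Perm (Fin n)} :
    Covers (leftHull u) v ↔ ∀ i : Fin n, (∃ a, a ≤ i ∧ u a ≤ v i) ∧ ∃ b, i ≤ b ∧ v i ≤ u b := by
  simp only [Covers, leftHull, mem_filter, mem_grid, Fin.is_lt, true_and, Fin.le_def]

lemma isRightSkewFerrers_rightHull (w : Perm (Fin n)) : IsRightSkewFerrers n (rightHull w) := by
  refine ⟨(grid n n).filter fun c => ∃ b : Fin n, c.1 ≤ b ∧ (w b : ℕ) ≤ c.2,
    (grid n n).filter fun c => ¬ ∃ a : Fin n, (a : ℕ) ≤ c.1 ∧ c.2 ≤ w a,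
    ⟨filter_subset _ _, ?_⟩, ⟨filter_subset _ _, ?_⟩, ?_, ?_⟩
  · rintro i j i' j' hij hi' hj' hj'n
    simp only [mem_filter, mem_grid] at hij ⊢
    obtain ⟨_, b, hb⟩ := hij
    exact ⟨by omega, b, by omega⟩
  · rintro i j i' j' hij hi' hj' hj'n
    simp only [mem_filter, mem_grid, not_exists, not_and, not_le] at hij ⊢
    exact ⟨by omega, fun a ha => hij.2 a (ha.trans hi') |>.trans_le hj'⟩
  · -- a cell with no rook weakly north-east lies east of the rook in its own row
    intro c hc
    simp only [mem_filter, mem_grid, not_exists, not_and, not_le] at hc ⊢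
    exact ⟨hc.1, ⟨c.1, hc.1.1⟩, le_rfl, (hc.2 ⟨c.1, hc.1.1⟩ le_rfl).le⟩
  · ext c
    simp only [rightHull, mem_filter, mem_sdiff, not_and, not_not]
    tauto

lemma isLeftSkewFerrers_leftHull (u : Perm (Fin n)) : IsLeftSkewFerrers n (leftHull u) := by
  refine ⟨(grid n n).filter fun c => ∃ b : Fin n, c.1 ≤ b ∧ c.2 ≤ u b,
    (grid n n).filter fun c => ¬ ∃ a : Fin n, (a : ℕ) ≤ c.1 ∧ (u a : ℕ) ≤ c.2,
    ⟨filter_subset _ _, ?_⟩, ⟨filter_subset _ _, ?_⟩, ?_, ?_⟩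
  · rintro i j i' j' hij hi' hj'
    simp only [mem_filter, mem_grid] at hij ⊢
    obtain ⟨_, b, hb⟩ := hij
    exact ⟨by omega, b, by omega⟩
  · rintro i j i' j' hij hi' hj'
    simp only [mem_filter, mem_grid, not_exists, not_and, not_le] at hij ⊢
    exact ⟨by omega, fun a ha => hj'.trans_lt (hij.2 a (ha.trans hi'))⟩
  · intro c hc
    simp only [mem_filter, mem_grid, not_exists, not_and, not_le] at hc ⊢
    exact ⟨hc.1, ⟨c.1, hc.1.1⟩, le_rfl, (hc.2 ⟨c.1, hc.1.1⟩ le_rfl).le⟩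
  · ext c
    simp only [leftHull, mem_filter, mem_sdiff, not_and, not_not]
    tauto

lemma covers_rightHull_self (w : Perm (Fin n)) : Covers (rightHull w) w :=
  covers_rightHull_iff.2 fun i => ⟨⟨i, le_rfl, le_rfl⟩, i, le_rfl, le_rfl⟩

lemma covers_leftHull_self (u : Perm (Fin n)) : Covers (leftHull u) u :=
  covers_leftHull_iff.2 fun i => ⟨⟨i, le_rfl, le_rfl⟩, i, le_rfl, le_rfl⟩

lemma rightHull_subset {w : Perm (Fin n)} {B : Board} (hB : IsRightSkewFerrers n B)
    (hw : Covers B w) : rightHull w ⊆ B := by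
  obtain ⟨L, M, hL, hM, -, rfl⟩ := hB
  intro c hc
  simp only [rightHull, mem_filter, mem_grid] at hc
  obtain ⟨⟨-, hc2⟩, ⟨a, ha⟩, ⟨b, hb⟩⟩ := hc
  refine mem_sdiff.2 ⟨hL.2 _ _ c.1 c.2 (mem_sdiff.1 (hw b)).1 hb.1 hb.2 hc2, fun hcM => ?_⟩
  exact (mem_sdiff.1 (hw a)).2 (hM.2 c.1 c.2 _ _ hcM ha.1 ha.2 (w a).is_lt)

lemma leftHull_subset {u : Perm (Fin n)} {B : Board} (hB : IsLeftSkewFerrers n B)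
    (hu : Covers B u) : leftHull u ⊆ B := by
  obtain ⟨L, M, hL, hM, -, rfl⟩ := hB
  intro c hc
  simp only [leftHull, mem_filter] at hc
  obtain ⟨-, ⟨a, ha⟩, ⟨b, hb⟩⟩ := hc
  refine mem_sdiff.2 ⟨hL.2 _ _ c.1 c.2 (mem_sdiff.1 (hu b)).1 hb.1 hb.2, fun hcM => ?_⟩
  exact (mem_sdiff.1 (hu a)).2 (hM.2 c.1 c.2 _ _ hcM ha.1 ha.2)

lemma IsRightHull.eq_rightHull {w : Perm (Fin n)} {H : Board} (h : IsRightHull w H) :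
    H = rightHull w :=
  (h.2.2 _ (isRightSkewFerrers_rightHull w) (covers_rightHull_self w)).antisymm
    (rightHull_subset h.1 h.2.1)

lemma IsLeftHull.eq_leftHull {u : Perm (Fin n)} {H : Board} (h : IsLeftHull u H) :
    H = leftHull u :=
  (h.2.2 _ (isLeftSkewFerrers_leftHull u) (covers_leftHull_self u)).antisymm
    (leftHull_subset h.1 h.2.1)

lemma neRank_pos_of_covers_rightHull {w v : Perm (Fin n)} (hv : Covers (rightHull w) v)
    {i j : ℕ} (h : 0 < neRank v i j) : 0 < neRank w i j := by
  obtain ⟨x, hx, hjx⟩ := (neRank_pos_iff v).1 h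
  obtain ⟨a, hax, hxa⟩ := ((covers_rightHull_iff.1 hv) x).1
  exact (neRank_pos_iff w).2 ⟨a, by omega, by omega⟩

lemma swRank_pos_of_covers_rightHull {w v : Perm (Fin n)} (hv : Covers (rightHull w) v)
    {i j : ℕ} (h : 0 < swRank v i j) : 0 < swRank w i j := by
  obtain ⟨x, hx, hxj⟩ := (swRank_pos_iff v).1 h
  obtain ⟨b, hxb, hbx⟩ := ((covers_rightHull_iff.1 hv) x).2
  exact (swRank_pos_iff w).2 ⟨b, by omega, by omega⟩

lemma covers_rightHull_of_bruhatLE {w v : Perm (Fin n)} (h : BruhatLE v w) :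
    Covers (rightHull w) v := by
  rw [bruhatLE_iff_neRank_le] at h
  refine covers_rightHull_iff.2 fun i => ⟨?_, ?_⟩
  · have hv : 0 < neRank v (i + 1) (v i) := (neRank_pos_iff v).2 ⟨i, by omega, le_rfl⟩
    obtain ⟨a, hai, ha⟩ := (neRank_pos_iff w).1 (hv.trans_le (h _ _ i.is_lt (v i).is_lt.le))
    exact ⟨a, by omega, by omega⟩
  · by_contra! hw
    have hv : 0 < swRank v i (v i + 1) := (swRank_pos_iff v).2 ⟨i, le_rfl, by omega⟩
    have hw0 : swRank w i (v i + 1) = 0 := by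
      by_contra hne
      obtain ⟨b, hib, hb⟩ := (swRank_pos_iff w).1 (Nat.pos_of_ne_zero hne)
      exact absurd (hw b (by omega)) (by omega)
    have := neRank_add_eq v (i := i) (j := v i + 1) (by omega) (by omega)
    have := neRank_add_eq w (i := i) (j := v i + 1) (by omega) (by omega)
    have := h i (v i + 1) i.is_lt.le (v i).is_lt
    omega

lemma containsPattern_of_strictMono {m : ℕ} {π : Perm (Fin n)} {σ : Perm (Fin m)}
    {f : Fin m → Fin n} (hf : StrictMono f) (hπf : StrictMono fun k => π (f (σ.symm k))) :
    ContainsPattern π σ :=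
  ⟨f, hf, fun a b => by simpa using (hπf.lt_iff_lt (a := σ a) (b := σ b)).symm⟩

section Patterns

variable {w : Perm (Fin n)}

lemma containsPattern_p4231 {a b c d : Fin n} (h₁ : a < b) (h₂ : b < c) (h₃ : c < d)
    (v₁ : w d < w b) (v₂ : w b < w c) (v₃ : w c < w a) : ContainsPattern w p4231 :=
  containsPattern_of_strictMono (f := ![a, b, c, d])
    (Fin.strictMono_iff_lt_succ.2 fun k => by fin_cases k <;> assumption)
    (Fin.strictMono_iff_lt_succ.2 fun k => by fin_cases k <;> assumption)

lemma containsPattern_p35142 {a b c d e : Fin n} (h₁ : a < b) (h₂ : b < c) (h₃ : c < d)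
    (h₄ : d < e) (v₁ : w c < w e) (v₂ : w e < w a) (v₃ : w a < w d) (v₄ : w d < w b) :
    ContainsPattern w p35142 :=
  containsPattern_of_strictMono (f := ![a, b, c, d, e])
    (Fin.strictMono_iff_lt_succ.2 fun k => by fin_cases k <;> assumption)
    (Fin.strictMono_iff_lt_succ.2 fun k => by fin_cases k <;> assumption)

lemma containsPattern_p42513 {a b c d e : Fin n} (h₁ : a < b) (h₂ : b < c) (h₃ : c < d)
    (h₄ : d < e) (v₁ : w d < w b) (v₂ : w b < w e) (v₃ : w e < w a) (v₄ : w a < w c) :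
    ContainsPattern w p42513 :=
  containsPattern_of_strictMono (f := ![a, b, c, d, e])
    (Fin.strictMono_iff_lt_succ.2 fun k => by fin_cases k <;> assumption)
    (Fin.strictMono_iff_lt_succ.2 fun k => by fin_cases k <;> assumption)

lemma containsPattern_p351624 {a b c d e f : Fin n} (h₁ : a < b) (h₂ : b < c) (h₃ : c < d)
    (h₄ : d < e) (h₅ : e < f) (v₁ : w c < w e) (v₂ : w e < w a) (v₃ : w a < w f)
    (v₄ : w f < w b) (v₅ : w b < w d) : ContainsPattern w p351624 :=
  containsPattern_of_strictMono (f := ![a, b, c, d, e, f])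
    (Fin.strictMono_iff_lt_succ.2 fun k => by fin_cases k <;> assumption)
    (Fin.strictMono_iff_lt_succ.2 fun k => by fin_cases k <;> assumption)

end Patterns

/-- The cell `(q, w d)` with `q = p + 1` at which the induction of
`neRank_le_of_covers_rightHull` gets stuck: `w p < w d ≤ w q`, the rook of column `w d` lies in a
row `≥ q`, that of column `w d - 1` in a row `< q`, and `a`, `s` are rooks strictly north-east and
south-west of the cell. -/
lemma not_corner {w : Perm (Fin n)} (hw : AvoidsThePatterns w) {p q d e a s : Fin n}
    (hpq : (q : ℕ) = p + 1) (hp : w p < w d) (hq : w d ≤ w q) (hd : q ≤ d) (he : e < q)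
    (hed : (w e : ℕ) + 1 = w d) (ha : a < q) (had : w d < w a) (hs : q < s)
    (hse : w s < w e) : False := by
  have hap : a < p := by
    have : a ≠ p := by rintro rfl; omega
    omega
  by_cases hlow : ∃ t, q ≤ t ∧ w t < w p
  · obtain ⟨t, hqt, htp⟩ := hlow
    have hqt : q < t := by
      have : t ≠ q := by rintro rfl; omega
      omega
    rcases lt_or_gt_of_ne (show d ≠ t by rintro rfl; omega) with hdt | htd
    · exact hw.1 (containsPattern_p4231 (a := a) (b := p) (c := d) (d := t)
        (by omega) (by omega) hdt htp (by omega) had)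
    rcases lt_or_gt_of_ne (w.injective.ne (show q ≠ a by rintro rfl; omega)) with hqa | haq
    · exact hw.1 (containsPattern_p4231 (a := a) (b := p) (c := q) (d := t)
        (by omega) (by omega) hqt htp (by omega) hqa)
    · exact hw.2.2.1 (containsPattern_p42513 (a := a) (b := p) (c := q) (d := t) (e := d)
        (by omega) (by omega) hqt htd htp hp had haq)
  push Not at hlow
  have hps : w p < w s := lt_of_le_of_ne (hlow s hs.le) (w.injective.ne (by rintro rfl; omega))
  have hsd : s ≠ d := by rintro rfl; omega
  rcases lt_or_gt_of_ne (show e ≠ a by rintro rfl; omega) with hea | hae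
  · rcases lt_or_gt_of_ne hsd.symm with hds | hsd
    · exact hw.2.1 (containsPattern_p35142 (a := e) (b := a) (c := p) (d := d) (e := s)
        hea hap (by omega) hds hps hse (by omega) had)
    rcases lt_or_gt_of_ne (w.injective.ne (show q ≠ a by rintro rfl; omega)) with hqa | haq
    · exact hw.2.1 (containsPattern_p35142 (a := e) (b := a) (c := p) (d := q) (e := s)
        hea hap (by omega) hs hps hse (by omega) hqa)
    · exact hw.2.2.2 (containsPattern_p351624 (a := e) (b := a) (c := p) (d := q) (e := s) (f := d)
        hea hap (by omega) hs hsd hps hse (by omega) had haq)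
  · rcases lt_or_gt_of_ne hsd.symm with hds | hsd
    · exact hw.1 (containsPattern_p4231 (a := a) (b := e) (c := d) (d := s)
        hae (by omega) hds hse (by omega) had)
    rcases lt_or_gt_of_ne (w.injective.ne (show q ≠ a by rintro rfl; omega)) with hqa | haq
    · exact hw.1 (containsPattern_p4231 (a := a) (b := e) (c := q) (d := s)
        hae he hs hse (by omega) hqa)
    · exact hw.2.2.1 (containsPattern_p42513 (a := a) (b := e) (c := q) (d := s) (e := d)
        hae he hs hsd hse (by omega) had haq)

lemma not_corner_of_rank_pos {w : Perm (Fin n)} (hw : AvoidsThePatterns w) {p q d e : Fin n}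
    (hpq : (q : ℕ) = p + 1) (hp : w p < w d) (hq : w d ≤ w q) (hd : q ≤ d) (he : e < q)
    (hed : (w e : ℕ) + 1 = w d) (hne : 0 < neRank w q (w d)) (hsw : 0 < swRank w q (w d)) :
    False := by
  obtain ⟨a, haq, hda⟩ := (neRank_pos_iff w).1 hne
  obtain ⟨s, hqs, hsd⟩ := (swRank_pos_iff w).1 hsw
  have had : a ≠ d := by rintro rfl; omega
  have hse : s ≠ e := by rintro rfl; omega
  have hsq : s ≠ q := by rintro rfl; omega
  exact not_corner hw hpq hp hq hd he hed haq (lt_of_le_of_ne hda (w.injective.ne had).symm)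
    (lt_of_le_of_ne hqs hsq.symm) (lt_of_le_of_ne (by omega) (w.injective.ne hse))

/-- Each step passes to a neighbouring cell whose inequality implies the one at `(i, j)`, either
lowering the rank of `w` or keeping it and lowering `n - i + j`; when no step applies, the cell is
the corner excluded by `not_corner_of_rank_pos`. -/
theorem neRank_le_of_covers_rightHull {w v : Perm (Fin n)} (hw : AvoidsThePatterns w)
    (hv : Covers (rightHull w) v) {i j : ℕ} (hi : i ≤ n) (hj : j ≤ n) :
    neRank v i j ≤ neRank w i j := by
  by_cases hne : neRank w i j = 0
  · have := mt (neRank_pos_of_covers_rightHull hv (i := i) (j := j))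
    omega
  by_cases hsw : swRank w i j = 0
  · have := mt (swRank_pos_of_covers_rightHull hv (i := i) (j := j))
    have := neRank_add_eq v hi hj
    have := neRank_add_eq w hi hj
    omega
  have hi0 : 0 < i := Nat.pos_of_ne_zero fun h => hne (h ▸ neRank_zero_left w j)
  have hin : i < n := lt_of_le_of_ne hi fun h => hsw (swRank_eq_zero_of_le w h.ge j)
  have hj0 : 0 < j := Nat.pos_of_ne_zero fun h => hsw (h ▸ swRank_zero_right w i)
  have hjn : j < n := lt_of_le_of_ne hj fun h => hne (neRank_eq_zero_of_le w h.ge)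
  obtain ⟨p, hp⟩ : ∃ p : Fin n, (p : ℕ) + 1 = i := ⟨⟨i - 1, by omega⟩, by simp; omega⟩
  obtain ⟨q, hq⟩ : ∃ q : Fin n, (q : ℕ) = i := ⟨⟨i, hin⟩, rfl⟩
  obtain ⟨d, hd⟩ : ∃ d : Fin n, (w d : ℕ) = j := ⟨w.symm ⟨j, hjn⟩, by simp⟩
  obtain ⟨e, he⟩ : ∃ e : Fin n, (w e : ℕ) + 1 = j := ⟨w.symm ⟨j - 1, by omega⟩, by simp; omega⟩
  by_cases hpj : j ≤ w p
  · have hstep : neRank w (i - 1) j < neRank w i j := by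
      simpa only [← hp, Nat.add_sub_cancel] using neRank_lt_succ_left w hpj
    have := neRank_succ_left_le v (i - 1) j
    have := neRank_le_of_covers_rightHull hw hv (i := i - 1) (j := j) (by omega) hj
    rw [Nat.sub_add_cancel hi0] at *
    omega
  by_cases hdi : (d : ℕ) < i
  · have hstep : neRank w i (j + 1) < neRank w i j := hd ▸ neRank_succ_right_lt w hdi
    have := neRank_le_succ_right_add_one v i j
    have := neRank_le_of_covers_rightHull hw hv (i := i) (j := j + 1) hi hjn
    omega
  by_cases hqj : (w q : ℕ) < j
  · have hstep : neRank w (i + 1) j = neRank w i j := hq ▸ neRank_succ_left_of_lt w hqj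
    have := neRank_mono_left v (Nat.le_add_right i 1) j
    have := neRank_le_of_covers_rightHull hw hv (i := i + 1) (j := j) hin hj
    omega
  by_cases hie : i ≤ (e : ℕ)
  · have hstep : neRank w i j = neRank w i (j - 1) := by
      have := neRank_succ_right_of_forall_ne w (i := i) (j := j - 1) fun a ha hae =>
        absurd (w.injective (Fin.ext (by omega)) : a = e) (by rintro rfl; omega)
      rwa [Nat.sub_add_cancel hj0] at this
    have := neRank_anti_right v i (Nat.sub_le j 1)
    have := neRank_le_of_covers_rightHull hw hv (i := i) (j := j - 1) hi (by omega)
    omega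
  subst hq hd
  exact (not_corner_of_rank_pos hw (p := p) (e := e) (by omega) (by omega) (by omega) (by omega)
    (by omega) he (Nat.pos_of_ne_zero hne) (Nat.pos_of_ne_zero hsw)).elim
termination_by (neRank w i j, n - i + j)
decreasing_by all_goals (rw [Prod.lex_def]; omega)

theorem covers_rightHull_iff_bruhatLE {w v : Perm (Fin n)} (hw : AvoidsThePatterns w) :
    Covers (rightHull w) v ↔ BruhatLE v w :=
  ⟨fun hv => bruhatLE_iff_neRank_le.2 fun _ _ => neRank_le_of_covers_rightHull hw hv,
    covers_rightHull_of_bruhatLE⟩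

def flipRows (π : Perm (Fin n)) : Perm (Fin n) := Fin.revPerm.trans π

lemma flipRows_apply (π : Perm (Fin n)) (i : Fin n) : flipRows π i = π i.rev := rfl

lemma flipRows_flipRows (π : Perm (Fin n)) : flipRows (flipRows π) = π := by
  ext i
  simp [flipRows_apply]

lemma neRank_flipRows_add (π : Perm (Fin n)) {i j : ℕ} (hi : i ≤ n) (hj : j ≤ n) :
    neRank (flipRows π) i j + neRank π (n - i) j = n - j := by
  have hflip : neRank (flipRows π) i j = #{b : Fin n | n - i ≤ (b : ℕ) ∧ j ≤ π b} := by
    rw [neRank]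
    refine card_equiv Fin.revPerm fun a => ?_
    have := a.is_lt
    rw [mem_filter_univ, mem_filter_univ]
    simp only [flipRows_apply, Fin.revPerm_apply, Fin.val_rev]
    omega
  have hsplit := card_filter_add_card_filter_not (s := {b : Fin n | j ≤ π b})
    (fun b => (b : ℕ) < n - i)
  simp only [filter_filter, card_le_apply π hj, not_lt] at hsplit
  rw [hflip, neRank, ← hsplit, add_comm]
  congr 2 <;> ext b <;> simp [and_comm]

lemma bruhatLE_flipRows {u v : Perm (Fin n)} (h : BruhatLE u v) :
    BruhatLE (flipRows v) (flipRows u) := by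
  rw [bruhatLE_iff_neRank_le] at h ⊢
  intro i j hi hj
  have := neRank_flipRows_add u hi hj
  have := neRank_flipRows_add v hi hj
  have := h (n - i) j (Nat.sub_le n i) hj
  omega

lemma bruhatLE_flipRows_iff {u v : Perm (Fin n)} :
    BruhatLE (flipRows v) (flipRows u) ↔ BruhatLE u v :=
  ⟨fun h => by simpa only [flipRows_flipRows] using bruhatLE_flipRows h, bruhatLE_flipRows⟩

lemma covers_leftHull_iff_flipRows {u v : Perm (Fin n)} :
    Covers (leftHull u) v ↔ Covers (rightHull (flipRows u)) (flipRows v) := by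
  simp only [covers_leftHull_iff, covers_rightHull_iff, flipRows_apply]
  constructor <;> intro h i
  · obtain ⟨⟨a, hai, ha⟩, b, hib, hb⟩ := h i.rev
    exact ⟨⟨b.rev, Fin.rev_le_iff.2 hib, by rwa [Fin.rev_rev]⟩,
      a.rev, Fin.le_rev_iff.2 hai, by rwa [Fin.rev_rev]⟩
  · obtain ⟨⟨a, hai, ha⟩, b, hib, hb⟩ := h i.rev
    rw [Fin.rev_rev] at ha hb
    exact ⟨⟨b.rev, Fin.rev_le_iff.2 hib, hb⟩, a.rev, Fin.le_rev_iff.2 hai, ha⟩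

theorem covers_leftHull_iff_bruhatLE {u v : Perm (Fin n)} (hu : AvoidsThePatterns (flipRows u)) :
    Covers (leftHull u) v ↔ BruhatLE u v := by
  rw [covers_leftHull_iff_flipRows, covers_rightHull_iff_bruhatLE hu, bruhatLE_flipRows_iff]

lemma covers_inter_iff {A B : Board} {π : Perm (Fin n)} :
    Covers (A ∩ B) π ↔ Covers A π ∧ Covers B π := by
  simp only [Covers, mem_inter, forall_and]

def rookBoard (π : Perm (Fin n)) : Board := univ.image fun i : Fin n => ((i : ℕ), (π i : ℕ))

lemma covers_iff_rookBoard_subset {A : Board} {π : Perm (Fin n)} :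
    Covers A π ↔ rookBoard π ⊆ A := by
  simp [Covers, rookBoard, image_subset_iff]

lemma rookBoard_injective : Function.Injective (rookBoard (n := n)) := by
  intro π σ h
  ext i
  have hi : ((i : ℕ), (π i : ℕ)) ∈ rookBoard σ := h ▸ mem_image_of_mem _ (mem_univ i)
  obtain ⟨k, -, hk⟩ := mem_image.1 hi
  simp only [Prod.mk.injEq, Fin.val_inj] at hk
  rw [← hk.2, hk.1]

lemma card_rookBoard (π : Perm (Fin n)) : #(rookBoard π) = n := by
  rw [rookBoard, card_image_of_injective _ fun i k h => Fin.ext (Prod.ext_iff.1 h).1, card_univ,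
    Fintype.card_fin]

lemma invStat_rookBoard (π : Perm (Fin n)) : invStat n n (rookBoard π) = inversions π := by
  symm
  refine card_bij (fun p _ => ((p.2 : ℕ), (π p.1 : ℕ))) ?_ ?_ ?_
  · rintro ⟨a, b⟩ hab
    simp only [mem_filter_univ] at hab
    simp [rookBoard, mem_grid, Fin.val_inj, hab]
  · rintro ⟨a, b⟩ _ ⟨a', b'⟩ _ h
    simp only [Prod.mk.injEq, Fin.val_inj] at h
    rw [π.injective h.2, h.1]
  · rintro ⟨i, j⟩ hc
    simp only [rookBoard, mem_filter, mem_grid, forall_mem_image, mem_univ, true_implies] at hc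
    obtain ⟨⟨hi, hj⟩, hrow, hcol⟩ := hc
    refine ⟨(π.symm ⟨j, hj⟩, ⟨i, hi⟩), (mem_filter_univ _).2 ⟨hcol (by simp), ?_⟩, by simp⟩
    simpa [Fin.lt_def] using hrow (x := ⟨i, hi⟩) rfl

lemma exists_rookBoard_eq {C : Board} (hC : C ⊆ grid n n) (hcard : #C = n)
    (hrook : ∀ c ∈ C, ∀ c' ∈ C, c ≠ c' → c.1 ≠ c'.1 ∧ c.2 ≠ c'.2) :
    ∃ π : Perm (Fin n), rookBoard π = C := by
  have hrows : C.image Prod.fst = range n := by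
    refine eq_of_subset_of_card_le (fun x hx => ?_) ?_
    · obtain ⟨c, hc, rfl⟩ := mem_image.1 hx
      exact mem_range.2 (mem_grid.1 (hC hc)).1
    · rw [card_range, card_image_of_injOn fun c hc c' hc' h =>
        by_contra fun hne => (hrook c hc c' hc' hne).1 h, hcard]
  have hrow : ∀ i : Fin n, ∃ c ∈ C, c.1 = i := fun i =>
    mem_image.1 (hrows ▸ mem_range.2 i.is_lt)
  choose c hcC hc1 using hrow
  let f : Fin n → Fin n := fun i => ⟨(c i).2, (mem_grid.1 (hC (hcC i))).2⟩
  have hf : Function.Injective f := fun i k h => by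
    by_contra hne
    have hck : c i ≠ c k := fun h' => hne (Fin.ext (by rw [← hc1 i, ← hc1 k, h']))
    exact (hrook _ (hcC i) _ (hcC k) hck).2 (Fin.val_eq_of_eq h)
  refine ⟨Equiv.ofBijective f hf.bijective_of_finite,
    eq_of_subset_of_card_le (fun x hx => ?_) (by rw [hcard, card_rookBoard])⟩
  obtain ⟨i, -, rfl⟩ := mem_image.1 hx
  show ((i : ℕ), (c i).2) ∈ C
  rw [← hc1 i]
  exact hcC i

lemma rookConfigs_eq_image {A : Board} (hA : A ⊆ grid n n) :
    rookConfigs A n = ({π | Covers A π} : Finset (Perm (Fin n))).image rookBoard := by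
  ext C
  simp only [rookConfigs, mem_filter, mem_powerset, mem_image, mem_univ, true_and]
  constructor
  · rintro ⟨hCA, hcard, hrook⟩
    obtain ⟨π, rfl⟩ := exists_rookBoard_eq (hCA.trans hA) hcard hrook
    exact ⟨π, covers_iff_rookBoard_subset.2 hCA, rfl⟩
  · rintro ⟨π, hπ, rfl⟩
    refine ⟨covers_iff_rookBoard_subset.1 hπ, card_rookBoard π, ?_⟩
    simp only [rookBoard, mem_image, mem_univ, true_and]
    rintro _ ⟨i, rfl⟩ _ ⟨k, rfl⟩ hne
    have hik : i ≠ k := by rintro rfl; exact hne rfl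
    simpa [Fin.val_inj] using hik

theorem qRook_eq_sum_covers {F : Type*} [CommSemiring F] (q : F) {A : Board}
    (hA : A ⊆ grid n n) :
    qRook q n n A n = ∑ π : Perm (Fin n) with Covers A π, q ^ inversions π := by
  rw [qRook, rookConfigs_eq_image hA, sum_image fun π _ σ _ h => rookBoard_injective h]
  simp only [invStat_rookBoard]

theorem sum_bruhatInterval_eq_qRook {F : Type*} [CommSemiring F] (q : F) {u w : Perm (Fin n)}
    (hw : AvoidsThePatterns w) (hu : AvoidsThePatterns (flipRows u)) :
    ∑ v : Perm (Fin n) with BruhatLE u v ∧ BruhatLE v w, q ^ inversions v =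
      qRook q n n (rightHull w ∩ leftHull u) n := by
  rw [qRook_eq_sum_covers _ (inter_subset_left.trans (rightHull_subset_grid w))]
  refine sum_congr (filter_congr fun v _ => ?_) fun _ _ => rfl
  rw [covers_inter_iff, covers_rightHull_iff_bruhatLE hw, covers_leftHull_iff_bruhatLE hu, and_comm]

end

/-- If `w` and `u^↕` avoid 4231, 35142, 42513 and 351624, then the Poincaré
polynomial of the Bruhat interval `[u,w]` equals the `n`-th `q`-rook number of the board
`H_R(w) ∩ H_L(u)`. -/
theorem poincare_eq_qRook (n : ℕ) (u w : Equiv.Perm (Fin n))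
    (hw : AvoidsThePatterns w) (hu : AvoidsThePatterns (Fin.revPerm.trans u))
    (HR HL : Board) (hHR : IsRightHull w HR) (hHL : IsLeftHull u HL) :
    ∑ v ∈ Finset.univ.filter fun v : Equiv.Perm (Fin n) => BruhatLE u v ∧ BruhatLE v w,
        (RatFunc.X : RatFunc ℚ) ^ inversions v =
      qRook (RatFunc.X : RatFunc ℚ) n n (HR ∩ HL) n := by
  rw [hHR.eq_rightHull, hHL.eq_leftHull]
  exact sum_bruhatInterval_eq_qRook _ hw hu
end

section
/- Let n ≥ 1 and let w ∈ S_{2n} be the permutation (n+1, n+2, …, 2n, 1, 2, …, n), and let w^↕ ∈ S_{2n} be w flipped upside down, i.e., w^↕(i) = w(2n−i+1). Then the closed Bruhat interval [w^↕, w] in S_{2n} has exactly 2^n elements. -/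
open Finset

/-!
Comparing ranks with `w^↕` and `w` over the first `a + 1` rows, and over the last rows from
`2n-1-a` on, confines `v a` and `v (2n-1-a)` (for `a < n`) to `[n-1-a, n+a]`. So `σ = w⁻¹ v` never
increases the fold `f a = min a (2n-1-a)`; being a permutation it then preserves `f` (the sums of
`f ∘ σ` and `f` agree), i.e. `σ a ∈ {a, 2n-1-a}`. Conversely, on the top half `w σ` lies entrywise
between `w^↕ = w ∘ rev` and `w`, and on the bottom half between `w` and `w^↕`; comparing rank
functions over the first `i + 1` rows when `i < n`, and over the remaining rows otherwise, gives
`w^↕ ≤ w σ ≤ w`. The interval is thus in bijection with the stabilizer of `f`, of order `(2!)^n`.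
-/

open Equiv

section Bruhat

variable {N : ℕ} {u v : Perm (Fin N)}

lemma bruhatRank_eq_card_filter_Iic (π : Perm (Fin N)) (i j : Fin N) :
    bruhatRank π i j = #{a ∈ Iic i | j ≤ π a} := by
  unfold bruhatRank
  congr 1
  ext a
  simp

lemma bruhatRank_add_card_filter_Ioi (π : Perm (Fin N)) (i j : Fin N) :
    bruhatRank π i j + #{a ∈ Ioi i | j ≤ π a} = #(Ici j) := by
  have hπ : #{a | j ≤ π a} = #(Ici j) := card_equiv π (by simp)
  rw [← hπ, bruhatRank_eq_card_filter_Iic, ← card_union_of_disjoint]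
  · congr 1
    ext a
    simp only [mem_union, mem_filter, mem_Iic, mem_Ioi, mem_univ, true_and]
    constructor
    · rintro (h | h) <;> exact h.2
    · intro h
      exact (le_or_gt a i).imp (⟨·, h⟩) (⟨·, h⟩)
  · exact disjoint_filter_filter (disjoint_left.2 fun a ha ha' =>
      (mem_Ioi.1 ha').not_ge (mem_Iic.1 ha))

lemma BruhatLE.card_filter_Ioi_le (h : BruhatLE u v) (i j : Fin N) :
    #{a ∈ Ioi i | j ≤ v a} ≤ #{a ∈ Ioi i | j ≤ u a} := by
  have hu := bruhatRank_add_card_filter_Ioi u i j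
  have hv := bruhatRank_add_card_filter_Ioi v i j
  have := h i j
  omega

lemma BruhatLE.apply_lt_of_forall_apply_lt (h : BruhatLE u v) {i j : Fin N}
    (hv : ∀ b ≤ i, v b < j) {a : Fin N} (ha : a ≤ i) : u a < j := by
  have hv0 : bruhatRank v i j = 0 := by
    rw [bruhatRank_eq_card_filter_Iic]
    exact card_filter_eq_zero_iff.2 fun b hb => (hv b (mem_Iic.1 hb)).not_ge
  have hu0 : bruhatRank u i j = 0 := Nat.eq_zero_of_le_zero (hv0 ▸ h i j)
  rw [bruhatRank_eq_card_filter_Iic] at hu0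
  exact not_le.1 (card_filter_eq_zero_iff.1 hu0 a (mem_Iic.2 ha))

lemma BruhatLE.le_apply_of_forall_le_apply (h : BruhatLE u v) {i j : Fin N}
    (hu : ∀ b ≤ i, j ≤ u b) {a : Fin N} (ha : a ≤ i) : j ≤ v a := by
  have hu_full : bruhatRank u i j = #(Iic i) := by
    rw [bruhatRank_eq_card_filter_Iic]
    exact card_filter_eq_iff.2 fun b hb => hu b (mem_Iic.1 hb)
  have hv_full : #{b ∈ Iic i | j ≤ v b} = #(Iic i) :=
    le_antisymm (card_filter_le _ _) (bruhatRank_eq_card_filter_Iic v i j ▸ hu_full ▸ h i j)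
  exact card_filter_eq_iff.1 hv_full a (mem_Iic.2 ha)

lemma BruhatLE.apply_lt_of_forall_apply_lt' (h : BruhatLE u v) {i j : Fin N}
    (hu : ∀ b, i < b → u b < j) {a : Fin N} (ha : i < a) : v a < j := by
  have hu0 : #{b ∈ Ioi i | j ≤ u b} = 0 :=
    card_filter_eq_zero_iff.2 fun b hb => (hu b (mem_Ioi.1 hb)).not_ge
  have hv0 := Nat.eq_zero_of_le_zero (hu0 ▸ h.card_filter_Ioi_le i j)
  exact not_le.1 (card_filter_eq_zero_iff.1 hv0 a (mem_Ioi.2 ha))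

lemma BruhatLE.le_apply_of_forall_le_apply' (h : BruhatLE u v) {i j : Fin N}
    (hv : ∀ b, i < b → j ≤ v b) {a : Fin N} (ha : i < a) : j ≤ u a := by
  have hv_full : #{b ∈ Ioi i | j ≤ v b} = #(Ioi i) :=
    card_filter_eq_iff.2 fun b hb => hv b (mem_Ioi.1 hb)
  have hu_full : #{b ∈ Ioi i | j ≤ u b} = #(Ioi i) :=
    le_antisymm (card_filter_le _ _) (hv_full ▸ h.card_filter_Ioi_le i j)
  exact card_filter_eq_iff.1 hu_full a (mem_Ioi.2 ha)

lemma bruhatLE_of_forall (h : ∀ i, (∀ a ≤ i, u a ≤ v a) ∨ ∀ a, i < a → v a ≤ u a) :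
    BruhatLE u v := by
  intro i j
  rcases h i with hle | hge
  · simp only [bruhatRank_eq_card_filter_Iic]
    exact card_le_card fun a ha => by
      simp only [mem_filter, mem_Iic] at ha ⊢
      exact ⟨ha.1, ha.2.trans (hle a ha.1)⟩
  · have hu := bruhatRank_add_card_filter_Ioi u i j
    have hv := bruhatRank_add_card_filter_Ioi v i j
    have : #{a ∈ Ioi i | j ≤ v a} ≤ #{a ∈ Ioi i | j ≤ u a} := card_le_card fun a ha => by
      simp only [mem_filter, mem_Ioi] at ha ⊢
      exact ⟨ha.1, ha.2.trans (hge a ha.1)⟩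
    omega

end Bruhat

lemma Equiv.Perm.comp_eq_of_forall_le {α : Type*} [Fintype α] (σ : Perm α) {f : α → ℕ}
    (h : ∀ a, f (σ a) ≤ f a) : f ∘ σ = f :=
  funext fun a => (sum_eq_sum_iff_of_le fun a _ => h a).1 (Equiv.sum_comp σ f) a (mem_univ a)

def foldRev (n : ℕ) (a : Fin (2 * n)) : Fin n := ⟨min a (2 * n - 1 - a), by omega⟩

lemma foldRev_val {n : ℕ} (a : Fin (2 * n)) :
    (foldRev n a : ℕ) = min (a : ℕ) (2 * n - 1 - a) := rfl

lemma foldRev_eq_foldRev_iff {n : ℕ} {a b : Fin (2 * n)} :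
    foldRev n a = foldRev n b ↔ b = a ∨ b = a.rev := by
  simp only [foldRev, Fin.ext_iff, Fin.val_rev]
  omega

lemma card_foldRev_fiber {n : ℕ} (i : Fin n) : Fintype.card {a // foldRev n a = i} = 2 := by
  set a₀ : Fin (2 * n) := ⟨i, by omega⟩
  have hi : foldRev n a₀ = i := Fin.ext (by simp [foldRev, a₀]; omega)
  have hfiber : ({a | foldRev n a = i} : Finset (Fin (2 * n))) = {a₀, a₀.rev} := by
    ext a
    simp only [mem_filter, mem_univ, true_and, mem_insert, mem_singleton, ← hi,
      foldRev_eq_foldRev_iff, eq_comm (a := a₀), Fin.rev_eq_iff]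
  rw [Fintype.card_subtype, hfiber, card_pair]
  simp [Fin.ext_iff, a₀, Fin.val_rev]
  omega

lemma card_stabilizer_foldRev (n : ℕ) :
    Fintype.card {σ : Perm (Fin (2 * n)) // foldRev n ∘ σ = foldRev n} = 2 ^ n := by
  simp [DomMulAct.stabilizer_card, card_foldRev_fiber]

section Interval

variable {n : ℕ} {w : Perm (Fin (2 * n))}

lemma revPerm_trans_apply_val
    (hw : ∀ i : Fin (2 * n), (w i : ℕ) = if (i : ℕ) < n then (i : ℕ) + n else (i : ℕ) - n)
    (a : Fin (2 * n)) :
    ((Fin.revPerm.trans w) a : ℕ) = if (a : ℕ) < n then n - 1 - a else 3 * n - 1 - a := by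
  rw [trans_apply, Fin.revPerm_apply, hw, Fin.val_rev]
  split_ifs <;> omega

lemma apply_mem_Icc_of_lt
    (hw : ∀ i : Fin (2 * n), (w i : ℕ) = if (i : ℕ) < n then (i : ℕ) + n else (i : ℕ) - n)
    {v : Perm (Fin (2 * n))} (hv₁ : BruhatLE (Fin.revPerm.trans w) v) (hv₂ : BruhatLE v w)
    {a : Fin (2 * n)} (ha : (a : ℕ) < n) : n - 1 - a ≤ (v a : ℕ) ∧ (v a : ℕ) ≤ n + a := by
  constructor
  · have := hv₁.le_apply_of_forall_le_apply (j := ⟨n - 1 - a, by omega⟩) (fun b hb => ?_)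
      (le_refl a)
    · exact Fin.le_def.1 this
    rw [Fin.le_def] at hb ⊢
    simp only [revPerm_trans_apply_val hw b]
    split_ifs <;> omega
  · rcases lt_or_ge (n + a + 1) (2 * n) with hj | hj
    · have := hv₂.apply_lt_of_forall_apply_lt (j := ⟨n + a + 1, hj⟩) (fun b hb => ?_)
        (le_refl a)
      · exact Nat.le_of_lt_succ (Fin.lt_def.1 this)
      rw [Fin.le_def] at hb
      rw [Fin.lt_def, hw b]
      split_ifs <;> simp only <;> omega
    · omega

lemma apply_mem_Icc_of_ge
    (hw : ∀ i : Fin (2 * n), (w i : ℕ) = if (i : ℕ) < n then (i : ℕ) + n else (i : ℕ) - n)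
    {v : Perm (Fin (2 * n))} (hv₁ : BruhatLE (Fin.revPerm.trans w) v) (hv₂ : BruhatLE v w)
    {a : Fin (2 * n)} (ha : n ≤ (a : ℕ)) : a - n ≤ (v a : ℕ) ∧ (v a : ℕ) ≤ 3 * n - 1 - a := by
  have hi : a - 1 < 2 * n := by omega
  have hai : (⟨a - 1, hi⟩ : Fin (2 * n)) < a := Fin.lt_def.2 (by simp only; omega)
  constructor
  · have := hv₂.le_apply_of_forall_le_apply' (j := ⟨a - n, by omega⟩) (fun b hb => ?_) hai
    · exact Fin.le_def.1 this
    rw [Fin.lt_def] at hb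
    rw [Fin.le_def, hw b]
    simp only at hb ⊢
    split_ifs <;> omega
  · rcases lt_or_ge (3 * n - a) (2 * n) with hj | hj
    · have := hv₁.apply_lt_of_forall_apply_lt' (j := ⟨3 * n - a, hj⟩) (fun b hb => ?_) hai
      · have := Fin.lt_def.1 this
        simp only at this
        omega
      rw [Fin.lt_def] at hb ⊢
      simp only [revPerm_trans_apply_val hw b] at hb ⊢
      split_ifs <;> omega
    · omega

lemma foldRev_comp_of_mem_interval
    (hw : ∀ i : Fin (2 * n), (w i : ℕ) = if (i : ℕ) < n then (i : ℕ) + n else (i : ℕ) - n)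
    {v : Perm (Fin (2 * n))} (hv₁ : BruhatLE (Fin.revPerm.trans w) v) (hv₂ : BruhatLE v w) :
    foldRev n ∘ ⇑(w⁻¹ * v) = foldRev n := by
  have hle : ∀ a, (foldRev n ((w⁻¹ * v) a) : ℕ) ≤ foldRev n a := by
    intro a
    have hb := hw ((w⁻¹ * v) a)
    rw [show w ((w⁻¹ * v) a) = v a by simp] at hb
    rw [foldRev_val, foldRev_val]
    rcases lt_or_ge (a : ℕ) n with ha | ha
    · have := apply_mem_Icc_of_lt hw hv₁ hv₂ ha
      split_ifs at hb <;> omega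
    · have := apply_mem_Icc_of_ge hw hv₁ hv₂ ha
      split_ifs at hb <;> omega
  have := Perm.comp_eq_of_forall_le (w⁻¹ * v) (f := fun a => (foldRev n a : ℕ)) hle
  exact funext fun a => Fin.ext (congrFun this a)

lemma mem_interval_of_foldRev_comp
    (hw : ∀ i : Fin (2 * n), (w i : ℕ) = if (i : ℕ) < n then (i : ℕ) + n else (i : ℕ) - n)
    {σ : Perm (Fin (2 * n))} (hσ : foldRev n ∘ σ = foldRev n) :
    BruhatLE (Fin.revPerm.trans w) (w * σ) ∧ BruhatLE (w * σ) w := by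
  have hσ' (a : Fin (2 * n)) :
      (w (σ a) : ℕ) = w a ∨ (w (σ a) : ℕ) = (Fin.revPerm.trans w) a := by
    rcases foldRev_eq_foldRev_iff.1 (congrFun hσ a).symm with h | h <;> simp [h]
  have hw' := revPerm_trans_apply_val hw
  have htop (a : Fin (2 * n)) (ha : (a : ℕ) < n) :
      (Fin.revPerm.trans w) a ≤ w (σ a) ∧ w (σ a) ≤ w a := by
    simp only [Fin.le_def]
    rcases hσ' a with h | h <;> simp only [h, hw a, hw' a, if_pos ha] <;> omega
  have hbot (a : Fin (2 * n)) (ha : n ≤ (a : ℕ)) :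
      w a ≤ w (σ a) ∧ w (σ a) ≤ (Fin.revPerm.trans w) a := by
    simp only [Fin.le_def]
    rcases hσ' a with h | h <;> simp only [h, hw a, hw' a, if_neg ha.not_gt] <;> omega
  constructor <;> refine bruhatLE_of_forall fun i => ?_ <;> rcases lt_or_ge (i : ℕ) n with hi | hi
  · exact .inl fun a ha => (htop a ((Fin.le_def.1 ha).trans_lt hi)).1
  · exact .inr fun a ha => (hbot a (hi.trans (Fin.lt_def.1 ha).le)).2
  · exact .inl fun a ha => (htop a ((Fin.le_def.1 ha).trans_lt hi)).2
  · exact .inr fun a ha => (hbot a (hi.trans (Fin.lt_def.1 ha).le)).1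

theorem mem_interval_iff_foldRev_comp
    (hw : ∀ i : Fin (2 * n), (w i : ℕ) = if (i : ℕ) < n then (i : ℕ) + n else (i : ℕ) - n)
    (v : Perm (Fin (2 * n))) :
    BruhatLE (Fin.revPerm.trans w) v ∧ BruhatLE v w ↔ foldRev n ∘ ⇑(w⁻¹ * v) = foldRev n :=
  ⟨fun h => foldRev_comp_of_mem_interval hw h.1 h.2, fun h => by
    simpa using mem_interval_of_foldRev_comp hw h⟩

end Interval

theorem card_interval_eq_two_pow_general (n : ℕ) (w : Equiv.Perm (Fin (2 * n)))
    (hw : ∀ i : Fin (2 * n), (w i : ℕ) = if (i : ℕ) < n then (i : ℕ) + n else (i : ℕ) - n) :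
    (Finset.univ.filter fun v : Equiv.Perm (Fin (2 * n)) =>
        BruhatLE (Fin.revPerm.trans w) v ∧ BruhatLE v w).card = 2 ^ n := by
  rw [← card_stabilizer_foldRev n, Fintype.card_subtype]
  exact card_equiv (Equiv.mulLeft w⁻¹) fun v => by simp [mem_interval_iff_foldRev_comp hw]

/-- For `w = (n+1, …, 2n, 1, …, n) ∈ S_{2n}` (the maximal element of
`A_{2n-1}^{S∖{sₙ}}`), the closed Bruhat interval `[w^↕, w]` has exactly `2^n` elements. -/
theorem card_interval_eq_two_pow (n : ℕ) (hn : 1 ≤ n) (w : Equiv.Perm (Fin (2 * n)))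
    (hw : ∀ i : Fin (2 * n), (w i : ℕ) = if (i : ℕ) < n then (i : ℕ) + n else (i : ℕ) - n) :
    (Finset.univ.filter fun v : Equiv.Perm (Fin (2 * n)) =>
        BruhatLE (Fin.revPerm.trans w) v ∧ BruhatLE v w).card = 2 ^ n :=
  card_interval_eq_two_pow_general n w hw
end

section
/- Let A and B be zero-one matrices of sizes m×m and n×n respectively, and let B#A denote the (m+n)×(m+n) block matrix with B in the top-left block, A in the bottom-right block, and all-ones matrices J^{n,m}, J^{m,n} in the off-diagonal blocks. Then the (m+n)-th q-rook number of B#A satisfies R_{m+n}^{B#A}(q) = Σ_{i=0}^{min(m,n)} R_{m−i}^{A}(q) · R_{n−i}^{B^↻}(q) · ([i]!_q)² · q^{−i²}, where B^↻ is B rotated 180 degrees (B^↻_{i,j} = B_{n−i+1,n−j+1}). -/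
open Finset

/-!
A full rook placement on `B # A` is a permutation of the `m + n` rows. It consists of a placement
`CB` of `n - i` rooks on `B`, a placement `CA` of `m - i` rooks on `A`, and two bijections of `i`
rooks in the all-ones blocks: one between the rows left free by `CB` and the columns left free by
`CA`, the other between the rows left free by `CA` and the columns left free by `CB`.

For a permutation, `invStat` counts inversions, i.e. pairs of rooks one strictly north-east of the
other. For a partial placement it counts (free rows) × (free columns), plus the inversions, plus,
for every free row (column), the rooks above it (to its left). The inversions between the two
bijections and the diagonal blocks are exactly these free-line terms of `CA` and of the rotation
of `CB`, and all `i²` pairs taken from the two bijections are inversions. Hence the inversion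
number of the whole placement is `invStat CA + invStat (rot CB) - i²` plus the inversion numbers
of the two bijections, and summing `q ^ inv` over the bijections of two `i`-sets gives `[i]!_q`.
-/

namespace Rook

theorem mem_rookConfigs {A C : Board} {k : ℕ} :
    C ∈ rookConfigs A k ↔ C ⊆ A ∧ #C = k ∧ Set.InjOn Prod.fst (C : Set (ℕ × ℕ)) ∧
      Set.InjOn Prod.snd (C : Set (ℕ × ℕ)) := by
  simp only [rookConfigs, mem_filter, mem_powerset, Set.InjOn, mem_coe]
  refine and_congr_right fun _ => and_congr_right fun _ =>
    ⟨fun h => ⟨?_, ?_⟩, fun h c hc c' hc' hne => ?_⟩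
  · exact fun c hc c' hc' heq => by_contra fun hne => (h c hc c' hc' hne).1 heq
  · exact fun c hc c' hc' heq => by_contra fun hne => (h c hc c' hc' hne).2 heq
  · exact ⟨fun heq => hne (h.1 hc hc' heq), fun heq => hne (h.2 hc hc' heq)⟩

theorem rookConfigs_mono {A A' : Board} (h : A ⊆ A') (k : ℕ) : rookConfigs A k ⊆ rookConfigs A' k :=
  fun _ hC => by
    obtain ⟨hCA, hrest⟩ := mem_rookConfigs.1 hC
    exact mem_rookConfigs.2 ⟨hCA.trans h, hrest⟩

theorem filter_mem_rookConfigs {A A' C : Board} {k : ℕ} (hC : C ∈ rookConfigs A k)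
    {p : ℕ × ℕ → Prop} [DecidablePred p] (h : ∀ c ∈ C, p c → c ∈ A') :
    C.filter p ∈ rookConfigs A' #(C.filter p) := by
  obtain ⟨-, -, hfst, hsnd⟩ := mem_rookConfigs.1 hC
  have hsub : (C.filter p : Set (ℕ × ℕ)) ⊆ C := coe_subset.2 (filter_subset p C)
  exact mem_rookConfigs.2 ⟨fun c hc => h c (mem_filter.1 hc).1 (mem_filter.1 hc).2, rfl,
    hfst.mono hsub, hsnd.mono hsub⟩

theorem insert_mem_rookConfigs {R S : Finset ℕ} {r s k : ℕ} {M : Board} (hr : r ∈ R) (hs : s ∈ S)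
    (hM : M ∈ rookConfigs (R.erase r ×ˢ S.erase s) k) :
    insert (r, s) M ∈ rookConfigs (R ×ˢ S) (k + 1) := by
  obtain ⟨hsub, hcard, hfst, hsnd⟩ := mem_rookConfigs.1 hM
  have hrow : ∀ c ∈ M, c.1 ≠ r := fun c hc => (mem_erase.1 (mem_product.1 (hsub hc)).1).1
  have hcol : ∀ c ∈ M, c.2 ≠ s := fun c hc => (mem_erase.1 (mem_product.1 (hsub hc)).2).1
  have hnot : (r, s) ∉ M := fun h => hrow _ h rfl
  rw [mem_rookConfigs, coe_insert, Set.injOn_insert (mem_coe.not.2 hnot),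
    Set.injOn_insert (mem_coe.not.2 hnot)]
  refine ⟨insert_subset (mem_product.2 ⟨hr, hs⟩)
      (hsub.trans (product_subset_product (erase_subset r R) (erase_subset s S))),
    by rw [card_insert_of_notMem hnot, hcard], ⟨hfst, ?_⟩, ⟨hsnd, ?_⟩⟩
  · rintro ⟨c, hc, hcr⟩
    exact hrow c hc hcr
  · rintro ⟨c, hc, hcs⟩
    exact hcol c hc hcs

theorem erase_mem_rookConfigs {R S : Finset ℕ} {k : ℕ} {M : Board} {p : ℕ × ℕ} (hp : p ∈ M)
    (hM : M ∈ rookConfigs (R ×ˢ S) (k + 1)) :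
    M.erase p ∈ rookConfigs (R.erase p.1 ×ˢ S.erase p.2) k := by
  obtain ⟨hsub, hcard, hfst, hsnd⟩ := mem_rookConfigs.1 hM
  refine mem_rookConfigs.2 ⟨fun c hc => ?_, by rw [card_erase_of_mem hp, hcard, Nat.add_sub_cancel],
    hfst.mono (by simp), hsnd.mono (by simp)⟩
  obtain ⟨hcp, hcM⟩ := mem_erase.1 hc
  obtain ⟨hcR, hcS⟩ := mem_product.1 (hsub hcM)
  exact mem_product.2 ⟨mem_erase.2 ⟨fun h => hcp (hfst hcM hp h), hcR⟩,
    mem_erase.2 ⟨fun h => hcp (hsnd hcM hp h), hcS⟩⟩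

theorem image_fst_eq_of_mem_rookConfigs {R S : Finset ℕ} {C : Board}
    (hC : C ∈ rookConfigs (R ×ˢ S) #R) : C.image Prod.fst = R := by
  obtain ⟨hsub, hcard, hfst, -⟩ := mem_rookConfigs.1 hC
  refine eq_of_subset_of_card_le (fun r hr => ?_) (by rw [card_image_of_injOn hfst, hcard])
  obtain ⟨c, hc, rfl⟩ := mem_image.1 hr
  exact (mem_product.1 (hsub hc)).1

theorem image_snd_eq_of_mem_rookConfigs {R S : Finset ℕ} {C : Board}
    (hC : C ∈ rookConfigs (R ×ˢ S) #S) : C.image Prod.snd = S := by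
  obtain ⟨hsub, hcard, -, hsnd⟩ := mem_rookConfigs.1 hC
  refine eq_of_subset_of_card_le (fun r hr => ?_) (by rw [card_image_of_injOn hsnd, hcard])
  obtain ⟨c, hc, rfl⟩ := mem_image.1 hr
  exact (mem_product.1 (hsub hc)).2

theorem mem_grid {N : ℕ} {c : ℕ × ℕ} : c ∈ grid N N ↔ c.1 < N ∧ c.2 < N := by
  simp [grid]

theorem image_fst_eq_range {N : ℕ} {C : Board} (hC : C ∈ rookConfigs (grid N N) N) :
    C.image Prod.fst = range N :=
  image_fst_eq_of_mem_rookConfigs (R := range N) (S := range N) (by rwa [card_range])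

theorem image_snd_eq_range {N : ℕ} {C : Board} (hC : C ∈ rookConfigs (grid N N) N) :
    C.image Prod.snd = range N :=
  image_snd_eq_of_mem_rookConfigs (R := range N) (S := range N) (by rwa [card_range])

theorem card_filter_fst_of_full {N : ℕ} {C : Board} (hC : C ∈ rookConfigs (grid N N) N)
    (P : ℕ → Prop) [DecidablePred P] : #{c ∈ C | P c.1} = #{r ∈ range N | P r} := by
  rw [← image_fst_eq_range hC, filter_image, card_image_of_injOn
    ((mem_rookConfigs.1 hC).2.2.1.mono (filter_subset _ C))]

theorem card_filter_snd_of_full {N : ℕ} {C : Board} (hC : C ∈ rookConfigs (grid N N) N)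
    (P : ℕ → Prop) [DecidablePred P] : #{c ∈ C | P c.2} = #{s ∈ range N | P s} := by
  rw [← image_snd_eq_range hC, filter_image, card_image_of_injOn
    ((mem_rookConfigs.1 hC).2.2.2.mono (filter_subset _ C))]

def freeRows (N : ℕ) (C : Board) : Finset ℕ := range N \ C.image Prod.fst

def freeCols (N : ℕ) (C : Board) : Finset ℕ := range N \ C.image Prod.snd

theorem mem_freeRows {N r : ℕ} {C : Board} : r ∈ freeRows N C ↔ r < N ∧ ∀ c ∈ C, c.1 ≠ r := by
  simp only [freeRows, mem_sdiff, mem_range, mem_image, not_exists, not_and, ne_eq]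

theorem mem_freeCols {N s : ℕ} {C : Board} : s ∈ freeCols N C ↔ s < N ∧ ∀ c ∈ C, c.2 ≠ s := by
  simp only [freeCols, mem_sdiff, mem_range, mem_image, not_exists, not_and, ne_eq]

theorem ne_fst_of_mem_freeRows {N r : ℕ} {C : Board} (hr : r ∈ freeRows N C) {c : ℕ × ℕ}
    (hc : c ∈ C) : c.1 ≠ r := fun h => (mem_sdiff.1 hr).2 (mem_image.2 ⟨c, hc, h⟩)

theorem ne_snd_of_mem_freeCols {N s : ℕ} {C : Board} (hs : s ∈ freeCols N C) {c : ℕ × ℕ}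
    (hc : c ∈ C) : c.2 ≠ s := fun h => (mem_sdiff.1 hs).2 (mem_image.2 ⟨c, hc, h⟩)

theorem disjoint_freeRows_image_fst (N : ℕ) (C : Board) :
    Disjoint (freeRows N C) (C.image Prod.fst) :=
  sdiff_disjoint

theorem disjoint_freeCols_image_snd (N : ℕ) (C : Board) :
    Disjoint (freeCols N C) (C.image Prod.snd) :=
  sdiff_disjoint

theorem freeRows_union_image_fst {N : ℕ} {C : Board} (hC : C ⊆ grid N N) :
    freeRows N C ∪ C.image Prod.fst = range N :=
  sdiff_union_of_subset fun r hr => by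
    obtain ⟨c, hc, rfl⟩ := mem_image.1 hr
    exact mem_range.2 (mem_grid.1 (hC hc)).1

theorem freeCols_union_image_snd {N : ℕ} {C : Board} (hC : C ⊆ grid N N) :
    freeCols N C ∪ C.image Prod.snd = range N :=
  sdiff_union_of_subset fun r hr => by
    obtain ⟨c, hc, rfl⟩ := mem_image.1 hr
    exact mem_range.2 (mem_grid.1 (hC hc)).2

theorem card_freeRows {N : ℕ} {C : Board} (hC : C ⊆ grid N N)
    (hinj : Set.InjOn Prod.fst (C : Set (ℕ × ℕ))) : #(freeRows N C) = N - #C := by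
  have h := congrArg card (freeRows_union_image_fst hC)
  rw [card_union_of_disjoint (disjoint_freeRows_image_fst N C), card_image_of_injOn hinj,
    card_range] at h
  omega

theorem card_freeCols {N : ℕ} {C : Board} (hC : C ⊆ grid N N)
    (hinj : Set.InjOn Prod.snd (C : Set (ℕ × ℕ))) : #(freeCols N C) = N - #C := by
  have h := congrArg card (freeCols_union_image_snd hC)
  rw [card_union_of_disjoint (disjoint_freeCols_image_snd N C), card_image_of_injOn hinj,
    card_range] at h
  omega

theorem card_freeRows_of_mem_rookConfigs {N i : ℕ} {C : Board}
    (hC : C ∈ rookConfigs (grid N N) (N - i)) (hi : i ≤ N) : #(freeRows N C) = i := by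
  obtain ⟨hsub, hcard, hfst, -⟩ := mem_rookConfigs.1 hC
  rw [card_freeRows hsub hfst, hcard]
  omega

theorem card_freeCols_of_mem_rookConfigs {N i : ℕ} {C : Board}
    (hC : C ∈ rookConfigs (grid N N) (N - i)) (hi : i ≤ N) : #(freeCols N C) = i := by
  obtain ⟨hsub, hcard, -, hsnd⟩ := mem_rookConfigs.1 hC
  rw [card_freeCols hsub hsnd, hcard]
  omega

/-- The pairs `(x, y)` with `y` strictly north-east of `x` (row indices grow downwards); for a
rook placement these are its inversions. -/
def nePairs (X Y : Board) : ℕ := ∑ x ∈ X, ∑ y ∈ Y, if y.1 < x.1 ∧ x.2 < y.2 then 1 else 0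

theorem nePairs_union_left {X X' : Board} (h : Disjoint X X') (Y : Board) :
    nePairs (X ∪ X') Y = nePairs X Y + nePairs X' Y :=
  sum_union h

theorem nePairs_union_right (X : Board) {Y Y' : Board} (h : Disjoint Y Y') :
    nePairs X (Y ∪ Y') = nePairs X Y + nePairs X Y' := by
  simp only [nePairs, sum_union h, sum_add_distrib]

theorem nePairs_eq_zero {X Y : Board} (h : ∀ x ∈ X, ∀ y ∈ Y, x.1 ≤ y.1 ∨ y.2 ≤ x.2) :
    nePairs X Y = 0 :=
  sum_eq_zero fun x hx => sum_eq_zero fun y hy => if_neg (by have := h x hx y hy; omega)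

theorem nePairs_eq_card_mul {X Y : Board} (h : ∀ x ∈ X, ∀ y ∈ Y, y.1 < x.1 ∧ x.2 < y.2) :
    nePairs X Y = #X * #Y := by
  rw [nePairs, sum_congr rfl fun x hx => sum_congr rfl fun y hy => if_pos (h x hx y hy)]
  simp

theorem nePairs_of_forall_snd_lt {X Y : Board} (h : ∀ x ∈ X, ∀ y ∈ Y, x.2 < y.2) :
    nePairs X Y = ∑ x ∈ X, ∑ y ∈ Y, if y.1 < x.1 then 1 else 0 :=
  sum_congr rfl fun x hx => sum_congr rfl fun y hy => if_congr (and_iff_left (h x hx y hy)) rfl rfl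

theorem nePairs_of_forall_fst_lt {X Y : Board} (h : ∀ x ∈ X, ∀ y ∈ Y, y.1 < x.1) :
    nePairs X Y = ∑ x ∈ X, ∑ y ∈ Y, if x.2 < y.2 then 1 else 0 :=
  sum_congr rfl fun x hx => sum_congr rfl fun y hy => if_congr (and_iff_right (h x hx y hy)) rfl rfl

theorem forall_fst_eq_iff {C : Board} (hfst : Set.InjOn Prod.fst (C : Set (ℕ × ℕ)))
    {c : ℕ × ℕ} (hc : c ∈ C) {P : ℕ × ℕ → Prop} : (∀ d ∈ C, d.1 = c.1 → P d) ↔ P c :=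
  ⟨fun h => h c hc rfl, fun h _ hd hdc => hfst hd hc hdc ▸ h⟩

theorem forall_snd_eq_iff {C : Board} (hsnd : Set.InjOn Prod.snd (C : Set (ℕ × ℕ)))
    {c : ℕ × ℕ} (hc : c ∈ C) {P : ℕ × ℕ → Prop} : (∀ d ∈ C, d.2 = c.2 → P d) ↔ P c :=
  ⟨fun h => h c hc rfl, fun h _ hd hdc => hsnd hd hc hdc ▸ h⟩

/-- `invStat N N` with the comparison `<` replaced by an arbitrary relation. -/
def cornerCount (rel : ℕ → ℕ → Prop) [DecidableRel rel] (N : ℕ) (C : Board) : ℕ :=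
  #{a ∈ grid N N | (∀ c ∈ C, c.1 = a.1 → rel c.2 a.2) ∧ (∀ c ∈ C, c.2 = a.2 → rel c.1 a.1)}

theorem invStat_eq_cornerCount (N : ℕ) (C : Board) : invStat N N C = cornerCount (· < ·) N C :=
  rfl

/-- Sort the cells of the grid by whether their row and their column carry a rook of `C`. -/
theorem cornerCount_eq (rel : ℕ → ℕ → Prop) [DecidableRel rel] {N : ℕ} {C : Board}
    (hC : C ⊆ grid N N) (hfst : Set.InjOn Prod.fst (C : Set (ℕ × ℕ)))
    (hsnd : Set.InjOn Prod.snd (C : Set (ℕ × ℕ))) :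
    cornerCount rel N C = #(freeRows N C) * #(freeCols N C)
      + ∑ r ∈ freeRows N C, ∑ c ∈ C, (if rel c.1 r then 1 else 0)
      + ∑ c ∈ C, ∑ s ∈ freeCols N C, (if rel c.2 s then 1 else 0)
      + ∑ c ∈ C, ∑ c' ∈ C, (if rel c'.1 c.1 ∧ rel c.2 c'.2 then 1 else 0) := by
  have hsplit : cornerCount rel N C =
      ∑ r ∈ freeRows N C ∪ C.image Prod.fst, ∑ s ∈ freeCols N C ∪ C.image Prod.snd,
        if (∀ c ∈ C, c.1 = r → rel c.2 s) ∧ (∀ c ∈ C, c.2 = s → rel c.1 r) then 1 else 0 := by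
    rw [freeRows_union_image_fst hC, freeCols_union_image_snd hC, cornerCount, card_filter, grid,
      sum_product]
  simp only [hsplit, sum_union (disjoint_freeRows_image_fst N C),
    sum_union (disjoint_freeCols_image_snd N C), sum_image hfst, sum_image hsnd, sum_add_distrib]
  have hFF : ∀ r ∈ freeRows N C, ∀ s ∈ freeCols N C,
      ((∀ c ∈ C, c.1 = r → rel c.2 s) ∧ (∀ c ∈ C, c.2 = s → rel c.1 r)) := fun r hr s hs =>
    ⟨fun c hc h => absurd h (ne_fst_of_mem_freeRows hr hc),
      fun c hc h => absurd h (ne_snd_of_mem_freeCols hs hc)⟩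
  have hFC : ∀ r ∈ freeRows N C, ∀ c' ∈ C,
      ((∀ c ∈ C, c.1 = r → rel c.2 c'.2) ∧ (∀ c ∈ C, c.2 = c'.2 → rel c.1 r)) ↔ rel c'.1 r :=
    fun r hr c' hc' => by
      rw [forall_snd_eq_iff hsnd hc']
      exact and_iff_right fun c hc h => absurd h (ne_fst_of_mem_freeRows hr hc)
  have hCF : ∀ c ∈ C, ∀ s ∈ freeCols N C,
      ((∀ d ∈ C, d.1 = c.1 → rel d.2 s) ∧ (∀ d ∈ C, d.2 = s → rel d.1 c.1)) ↔ rel c.2 s :=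
    fun c hc s hs => by
      rw [forall_fst_eq_iff hfst hc]
      exact and_iff_left fun d hd h => absurd h (ne_snd_of_mem_freeCols hs hd)
  have hCC : ∀ c ∈ C, ∀ c' ∈ C,
      ((∀ d ∈ C, d.1 = c.1 → rel d.2 c'.2) ∧ (∀ d ∈ C, d.2 = c'.2 → rel d.1 c.1)) ↔
        rel c'.1 c.1 ∧ rel c.2 c'.2 :=
    fun c hc c' hc' => by rw [forall_fst_eq_iff hfst hc, forall_snd_eq_iff hsnd hc', and_comm]
  rw [sum_congr rfl fun r hr => sum_congr rfl fun s hs => if_pos (hFF r hr s hs),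
    sum_congr rfl fun r hr => sum_congr rfl fun c' hc' => if_congr (hFC r hr c' hc') rfl rfl,
    sum_congr rfl fun c hc => sum_congr rfl fun s hs => if_congr (hCF c hc s hs) rfl rfl,
    sum_congr rfl fun c hc => sum_congr rfl fun c' hc' => if_congr (hCC c hc c' hc') rfl rfl]
  simp only [sum_const, smul_eq_mul, mul_one]
  ring

theorem invStat_eq_nePairs {N : ℕ} {C : Board} (hC : C ∈ rookConfigs (grid N N) N) :
    invStat N N C = nePairs C C := by
  obtain ⟨hsub, -, hfst, hsnd⟩ := mem_rookConfigs.1 hC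
  have hR : freeRows N C = ∅ := by rw [freeRows, image_fst_eq_range hC, sdiff_self, bot_eq_empty]
  have hS : freeCols N C = ∅ := by rw [freeCols, image_snd_eq_range hC, sdiff_self, bot_eq_empty]
  rw [invStat_eq_cornerCount, cornerCount_eq _ hsub hfst hsnd, hR, hS]
  simp [nePairs]

def rotCell (n : ℕ) (c : ℕ × ℕ) : ℕ × ℕ := (n - 1 - c.1, n - 1 - c.2)

theorem rot180_eq_image (n : ℕ) (C : Board) : rot180 n n C = C.image (rotCell n) := rfl

theorem rotCell_rotCell {n : ℕ} {c : ℕ × ℕ} (hc : c ∈ grid n n) : rotCell n (rotCell n c) = c := by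
  have := mem_grid.1 hc
  ext <;> simp only [rotCell] <;> omega

theorem rotCell_mem_grid {n : ℕ} {c : ℕ × ℕ} (hc : c ∈ grid n n) : rotCell n c ∈ grid n n := by
  have := mem_grid.1 hc
  exact mem_grid.2 (by simp only [rotCell]; omega)

theorem injOn_rotCell (n : ℕ) : Set.InjOn (rotCell n) (grid n n : Set (ℕ × ℕ)) :=
  fun a ha b hb h => by rw [← rotCell_rotCell ha, h, rotCell_rotCell hb]

theorem image_rotCell_grid (n : ℕ) : (grid n n).image (rotCell n) = grid n n :=
  eq_of_subset_of_card_le (fun _ h => by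
      obtain ⟨c, hc, rfl⟩ := mem_image.1 h
      exact rotCell_mem_grid hc)
    (card_image_of_injOn (injOn_rotCell n)).ge

theorem rot180_subset_grid {n : ℕ} {C : Board} (hC : C ⊆ grid n n) : rot180 n n C ⊆ grid n n :=
  fun _ h => by
    obtain ⟨c, hc, rfl⟩ := mem_image.1 h
    exact rotCell_mem_grid (hC hc)

theorem rot180_rot180 {n : ℕ} {C : Board} (hC : C ⊆ grid n n) : rot180 n n (rot180 n n C) = C := by
  rw [rot180_eq_image, rot180_eq_image, image_image]
  exact (image_congr fun c hc => rotCell_rotCell (hC hc)).trans image_id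

/-- The rotated statistic counts the cells with no rook weakly to their left nor weakly above. -/
theorem invStat_rot180 {n : ℕ} {C : Board} (hC : C ⊆ grid n n) :
    invStat n n (rot180 n n C) = cornerCount (fun a b => b < a) n C := by
  rw [invStat, ← image_rotCell_grid n, filter_image, card_image_of_injOn
    ((injOn_rotCell n).mono (filter_subset _ _)), cornerCount]
  refine congrArg card (filter_congr fun a ha => ?_)
  have := mem_grid.1 ha
  simp only [rot180_eq_image, forall_mem_image]
  refine and_congr (forall₂_congr fun c hc => ?_) (forall₂_congr fun c hc => ?_) <;>
    have := mem_grid.1 (hC hc) <;> simp only [rotCell] <;> omega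

theorem rot180_mem_rookConfigs {n k : ℕ} {B C : Board} (hB : B ⊆ grid n n)
    (hC : C ∈ rookConfigs B k) : rot180 n n C ∈ rookConfigs (rot180 n n B) k := by
  obtain ⟨hCB, hcard, hfst, hsnd⟩ := mem_rookConfigs.1 hC
  have hlt : ∀ c ∈ C, c.1 < n ∧ c.2 < n := fun c hc => mem_grid.1 (hB (hCB hc))
  rw [rot180_eq_image, rot180_eq_image, mem_rookConfigs, coe_image]
  refine ⟨image_subset_image hCB, ?_, Set.InjOn.image_of_comp ?_, Set.InjOn.image_of_comp ?_⟩
  · rw [card_image_of_injOn ((injOn_rotCell n).mono fun c hc => hB (hCB hc)), hcard]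
  · intro c hc d hd h
    have := hlt c hc; have := hlt d hd
    exact hfst hc hd (by simp only [Function.comp, rotCell] at h; omega)
  · intro c hc d hd h
    have := hlt c hc; have := hlt d hd
    exact hsnd hc hd (by simp only [Function.comp, rotCell] at h; omega)

theorem qRook_rot180 {F : Type*} [CommSemiring F] (q : F) {n : ℕ} {B : Board}
    (hB : B ⊆ grid n n) (k : ℕ) :
    qRook q n n (rot180 n n B) k = ∑ C ∈ rookConfigs B k, q ^ invStat n n (rot180 n n C) := by
  have hgrid : ∀ {B' C : Board}, B' ⊆ grid n n → C ∈ rookConfigs B' k → C ⊆ grid n n :=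
    fun hB' hC => (mem_rookConfigs.1 hC).1.trans hB'
  have hrotB := rot180_subset_grid hB
  refine sum_nbij' (rot180 n n) (rot180 n n) (fun D hD => ?_) (fun C hC => ?_)
    (fun D hD => rot180_rot180 (hgrid hrotB hD)) (fun C hC => rot180_rot180 (hgrid hB hC))
    (fun D hD => by rw [rot180_rot180 (hgrid hrotB hD)])
  · simpa only [rot180_rot180 hB] using rot180_mem_rookConfigs hrotB hD
  · exact rot180_mem_rookConfigs hB hC

theorem sum_pow_card_filter_lt {F : Type*} [CommSemiring F] (q : F) (S : Finset ℕ) :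
    ∑ s ∈ S, q ^ #{t ∈ S | s < t} = qInt q #S := by
  have hanti : StrictAntiOn (fun s => #{t ∈ S | s < t}) (S : Set ℕ) := fun s hs s' hs' hlt =>
    card_lt_card ⟨fun t ht => mem_filter.2 ⟨(mem_filter.1 ht).1, hlt.trans (mem_filter.1 ht).2⟩,
      fun h => (mem_filter.1 (h (mem_filter.2 ⟨hs', hlt⟩))).2.false⟩
  have himage : S.image (fun s => #{t ∈ S | s < t}) = range #S := by
    refine eq_of_subset_of_card_le (fun j hj => ?_)
      (by rw [card_image_of_injOn hanti.injOn, card_range])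
    obtain ⟨s, hs, rfl⟩ := mem_image.1 hj
    exact mem_range.2 (card_lt_card ⟨filter_subset _ S, fun h => (mem_filter.1 (h hs)).2.false⟩)
  rw [← sum_image (f := (q ^ ·)) hanti.injOn, himage, qInt]

theorem nePairs_insert_of_forall_fst_lt {M : Board} {p : ℕ × ℕ} (hp : p ∉ M)
    (hlt : ∀ c ∈ M, c.1 < p.1) :
    nePairs (insert p M) (insert p M) = #{c ∈ M | p.2 < c.2} + nePairs M M := by
  have hdisj : Disjoint {p} M := disjoint_singleton_left.2 hp
  rw [insert_eq, nePairs_union_left hdisj, nePairs_union_right _ hdisj,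
    nePairs_union_right _ hdisj, nePairs_eq_zero (X := M) fun x hx y hy => ?_,
    nePairs_eq_zero (X := {p}) fun x hx y hy => ?_, nePairs, sum_singleton, card_filter]
  · simp only [zero_add]
    exact congrArg₂ _ (sum_congr rfl fun c hc => if_congr (and_iff_right (hlt c hc)) rfl rfl) rfl
  · rw [mem_singleton.1 hx, mem_singleton.1 hy]
    exact Or.inl le_rfl
  · rw [mem_singleton.1 hy]
    exact Or.inl (hlt x hx).le

theorem sum_rookConfigs_product_succ {M : Type*} [AddCommMonoid M] {R S : Finset ℕ} {k r : ℕ}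
    (hr : r ∈ R) (hR : #R = k + 1) (f : Board → M) :
    ∑ C ∈ rookConfigs (R ×ˢ S) (k + 1), f C =
      ∑ s ∈ S, ∑ C ∈ rookConfigs (R.erase r ×ˢ S.erase s) k, f (insert (r, s) C) := by
  have hrow : ∀ {s C}, C ∈ rookConfigs (R.erase r ×ˢ S.erase s) k → ∀ c ∈ C, c.1 ≠ r :=
    fun hC c hc => (mem_erase.1 (mem_product.1 ((mem_rookConfigs.1 hC).1 hc)).1).1
  have hnot : ∀ {s C}, C ∈ rookConfigs (R.erase r ×ˢ S.erase s) k → (r, s) ∉ C :=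
    fun hC h => hrow hC _ h rfl
  rw [← sum_sigma S (fun s => rookConfigs (R.erase r ×ˢ S.erase s) k)
    fun x => f (insert (r, x.1) x.2)]
  refine (sum_bij (fun x _ => insert (r, x.1) x.2) (fun x hx => ?_) ?_ (fun C hC => ?_)
    fun _ _ => rfl).symm
  · obtain ⟨hs, hC⟩ := mem_sigma.1 hx
    exact insert_mem_rookConfigs hr hs hC
  · rintro ⟨s, C⟩ hx ⟨s', C'⟩ hx' heq
    obtain ⟨-, hC⟩ := mem_sigma.1 hx
    obtain ⟨-, hC'⟩ := mem_sigma.1 hx'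
    have hss' : s = s' := by
      have hmem : (r, s) ∈ insert (r, s') C' := heq ▸ mem_insert_self _ _
      rcases mem_insert.1 hmem with h | h
      · exact (Prod.mk.inj h).2
      · exact absurd rfl (hrow hC' _ h)
    subst hss'
    dsimp only at hC hC' heq
    rw [← erase_insert (hnot hC), heq, erase_insert (hnot hC')]
  · have hrC : r ∈ C.image Prod.fst := by
      rw [image_fst_eq_of_mem_rookConfigs (hR ▸ hC)]; exact hr
    obtain ⟨p, hp, hpr⟩ := mem_image.1 hrC
    refine ⟨⟨p.2, C.erase p⟩, mem_sigma.2 ⟨(mem_product.1 ((mem_rookConfigs.1 hC).1 hp)).2,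
      hpr ▸ erase_mem_rookConfigs hp hC⟩, ?_⟩
    rw [← hpr, insert_erase hp]

/-- A full rook configuration on `R × S` is a bijection `R → S`, and `nePairs` counts its
inversions. -/
theorem sum_pow_nePairs_rookConfigs_product {F : Type*} [CommSemiring F] (q : F) {R S : Finset ℕ}
    (h : #S = #R) : ∑ M ∈ rookConfigs (R ×ˢ S) #R, q ^ nePairs M M = qFact q #R := by
  induction hk : #R generalizing R S with
  | zero =>
    rw [card_eq_zero.1 hk]
    simp [rookConfigs, filter_singleton, qFact, nePairs]
  | succ k ih =>
    have hne : R.Nonempty := card_pos.1 (by omega)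
    set r := R.max' hne
    have hr : r ∈ R := R.max'_mem hne
    have hR' : #(R.erase r) = k := by rw [card_erase_of_mem hr, hk, Nat.add_sub_cancel]
    have hS' : ∀ s ∈ S, #(S.erase s) = k := fun s hs => by
      rw [card_erase_of_mem hs, h, hk, Nat.add_sub_cancel]
    have hfiber : ∀ s ∈ S, ∀ M ∈ rookConfigs (R.erase r ×ˢ S.erase s) k,
        nePairs (insert (r, s) M) (insert (r, s) M) = #{t ∈ S | s < t} + nePairs M M := by
      intro s hs M hM
      obtain ⟨hsub, -, -, hsnd⟩ := mem_rookConfigs.1 hM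
      have hrows : ∀ c ∈ M, c.1 < r := fun c hc =>
        have hcR := (mem_product.1 (hsub hc)).1
        lt_of_le_of_ne (R.le_max' _ (mem_of_mem_erase hcR)) (mem_erase.1 hcR).1
      rw [nePairs_insert_of_forall_fst_lt (fun h => (hrows _ h).false) hrows,
        ← card_image_of_injOn (hsnd.mono (filter_subset _ M)), ← filter_image,
        image_snd_eq_of_mem_rookConfigs (by rwa [hS' s hs]), filter_erase,
        erase_eq_of_notMem fun h => (mem_filter.1 h).2.false]
    rw [sum_rookConfigs_product_succ hr hk, qFact, prod_range_succ, ← qFact,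
      show k + 1 = #S by omega, ← sum_pow_card_filter_lt, mul_sum]
    refine sum_congr rfl fun s hs => ?_
    rw [sum_congr rfl fun M hM => by rw [hfiber s hs M hM, pow_add], ← mul_sum,
      ih (by rw [hS' s hs, hR']) hR', mul_comm]

def shiftBoard (n : ℕ) (C : Board) : Board := C.image fun c => (c.1 + n, c.2 + n)

theorem injective_shift (n : ℕ) : Function.Injective fun c : ℕ × ℕ => (c.1 + n, c.2 + n) :=
  fun a b h => by
    simp only [Prod.mk.injEq, Nat.add_right_cancel_iff] at h
    exact Prod.ext h.1 h.2

theorem le_of_mem_shiftBoard {n : ℕ} {C : Board} {c : ℕ × ℕ} (hc : c ∈ shiftBoard n C) :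
    n ≤ c.1 ∧ n ≤ c.2 := by
  obtain ⟨a, -, rfl⟩ := mem_image.1 hc
  exact ⟨Nat.le_add_left _ _, Nat.le_add_left _ _⟩

theorem nePairs_shiftBoard (n : ℕ) (X Y : Board) :
    nePairs (shiftBoard n X) (shiftBoard n Y) = nePairs X Y := by
  simp only [nePairs, shiftBoard, sum_image (injective_shift n).injOn, Nat.add_lt_add_iff_right]

section BlockSharp

variable {m n : ℕ} {A B : Board}

theorem mem_blockSharp {c : ℕ × ℕ} :
    c ∈ blockSharp n m B A ↔ c ∈ B ∨ (c.1 < n ∧ n ≤ c.2 ∧ c.2 < n + m) ∨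
      (n ≤ c.1 ∧ c.1 < n + m ∧ c.2 < n) ∨ c ∈ shiftBoard n A := by
  simp only [blockSharp, shiftBoard, mem_union, mem_product, mem_range, mem_Ico, or_assoc,
    and_assoc]

theorem blockSharp_subset_grid (hA : A ⊆ grid m m) (hB : B ⊆ grid n n) :
    blockSharp n m B A ⊆ grid (m + n) (m + n) := fun c hc => by
  rw [mem_grid]
  rcases mem_blockSharp.1 hc with h | h | h | h
  · have := mem_grid.1 (hB h); omega
  · omega
  · omega
  · obtain ⟨a, ha, rfl⟩ := mem_image.1 h
    have := mem_grid.1 (hA ha); dsimp only; omega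

theorem mem_of_mem_blockSharp_of_lt {c : ℕ × ℕ} (hc : c ∈ blockSharp n m B A) (h1 : c.1 < n)
    (h2 : c.2 < n) : c ∈ B := by
  rcases mem_blockSharp.1 hc with h | h | h | h
  · exact h
  · omega
  · omega
  · obtain ⟨a, -, rfl⟩ := mem_image.1 h
    dsimp only at h1; omega

theorem mem_of_mem_blockSharp_of_le (hB : B ⊆ grid n n) {c : ℕ × ℕ}
    (hc : c ∈ blockSharp n m B A) (h1 : n ≤ c.1) (h2 : n ≤ c.2) : (c.1 - n, c.2 - n) ∈ A := by
  rcases mem_blockSharp.1 hc with h | h | h | h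
  · have := mem_grid.1 (hB h); omega
  · omega
  · omega
  · obtain ⟨a, ha, rfl⟩ := mem_image.1 h
    simpa using ha

end BlockSharp

/-- The board of the rooks in the top-right block: the rows left free by `CB` against the
columns left free by `CA`, shifted past the `n` columns of `B`. -/
def topRightBoard (m n : ℕ) (CA CB : Board) : Board :=
  freeRows n CB ×ˢ (freeCols m CA).image (· + n)

def bottomLeftBoard (m n : ℕ) (CA CB : Board) : Board :=
  (freeRows m CA).image (· + n) ×ˢ freeCols n CB

theorem lt_of_mem_topRightBoard {m n : ℕ} {CA CB : Board} {t : ℕ × ℕ}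
    (ht : t ∈ topRightBoard m n CA CB) : t.1 < n ∧ n ≤ t.2 ∧ t.2 < n + m := by
  simp only [topRightBoard, freeRows, freeCols, mem_product, mem_sdiff, mem_range, mem_image] at ht
  omega

theorem lt_of_mem_bottomLeftBoard {m n : ℕ} {CA CB : Board} {b : ℕ × ℕ}
    (hb : b ∈ bottomLeftBoard m n CA CB) : n ≤ b.1 ∧ b.1 < n + m ∧ b.2 < n := by
  simp only [bottomLeftBoard, freeRows, freeCols, mem_product, mem_sdiff, mem_range,
    mem_image] at hb
  omega

theorem positions_of_subset_blocks {m n : ℕ} {CA CB MTR MBL : Board} (hCB : CB ⊆ grid n n)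
    (hTR : MTR ⊆ topRightBoard m n CA CB) (hBL : MBL ⊆ bottomLeftBoard m n CA CB) :
    (∀ c ∈ CB, c.1 < n ∧ c.2 < n) ∧ (∀ c ∈ MTR, c.1 < n ∧ n ≤ c.2) ∧
      ∀ c ∈ MBL, n ≤ c.1 ∧ c.2 < n :=
  ⟨fun _ hc => mem_grid.1 (hCB hc),
    fun _ hc => (lt_of_mem_topRightBoard (hTR hc)).imp_right And.left,
    fun _ hc => (lt_of_mem_bottomLeftBoard (hBL hc)).imp_right And.right⟩

def topLeft (n : ℕ) (C : Board) : Board := {c ∈ C | c.1 < n ∧ c.2 < n}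

def topRight (n : ℕ) (C : Board) : Board := {c ∈ C | c.1 < n ∧ n ≤ c.2}

def bottomLeft (n : ℕ) (C : Board) : Board := {c ∈ C | n ≤ c.1 ∧ c.2 < n}

def bottomRight (n : ℕ) (C : Board) : Board :=
  {c ∈ C | n ≤ c.1 ∧ n ≤ c.2}.image fun c => (c.1 - n, c.2 - n)

theorem injOn_unshift (n : ℕ) (C : Board) :
    Set.InjOn (fun c : ℕ × ℕ => (c.1 - n, c.2 - n)) ({c ∈ C | n ≤ c.1 ∧ n ≤ c.2} : Board) :=
  fun a ha b hb h => by
    have := (mem_filter.1 ha).2; have := (mem_filter.1 hb).2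
    simp only [Prod.mk.injEq] at h
    exact Prod.ext (by omega) (by omega)

theorem shiftBoard_bottomRight (n : ℕ) (C : Board) :
    shiftBoard n (bottomRight n C) = {c ∈ C | n ≤ c.1 ∧ n ≤ c.2} := by
  rw [shiftBoard, bottomRight, image_image]
  refine (image_congr fun c hc => ?_).trans image_id
  have := (mem_filter.1 hc).2
  ext <;> simp only [Function.comp, id] <;> omega

theorem card_filter_range_lt {n N : ℕ} (h : n ≤ N) : #{r ∈ range N | r < n} = n := by
  rw [show {r ∈ range N | r < n} = range n by ext; simp; omega, card_range]

theorem card_filter_range_le {n m : ℕ} : #{r ∈ range (m + n) | n ≤ r} = m := by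
  rw [show {r ∈ range (m + n) | n ≤ r} = Ico n (m + n) by ext; simp; omega, Nat.card_Ico,
    Nat.add_sub_cancel]

section BlockCounts

variable {m n : ℕ} {A B C : Board} (hA : A ⊆ grid m m) (hB : B ⊆ grid n n)
  (hC : C ∈ rookConfigs (blockSharp n m B A) (m + n))
include hA hB hC

theorem card_topLeft_add_card_topRight : #(topLeft n C) + #(topRight n C) = n := by
  have hfull := rookConfigs_mono (blockSharp_subset_grid hA hB) _ hC
  have h := card_filter_fst_of_full hfull (· < n)
  rw [card_filter_range_lt (by omega), ← card_filter_add_card_filter_not (fun c => c.2 < n),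
    filter_filter, filter_filter] at h
  simpa only [topLeft, topRight, not_lt] using h

theorem card_topLeft_add_card_bottomLeft : #(topLeft n C) + #(bottomLeft n C) = n := by
  have hfull := rookConfigs_mono (blockSharp_subset_grid hA hB) _ hC
  have h := card_filter_snd_of_full hfull (· < n)
  rw [card_filter_range_lt (by omega), ← card_filter_add_card_filter_not (fun c => c.1 < n),
    filter_filter, filter_filter] at h
  simpa only [topLeft, bottomLeft, not_lt, and_comm] using h

theorem card_topRight_add_card_bottomRight : #(topRight n C) + #(bottomRight n C) = m := by
  have hfull := rookConfigs_mono (blockSharp_subset_grid hA hB) _ hC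
  have h := card_filter_snd_of_full hfull (n ≤ ·)
  rw [card_filter_range_le, ← card_filter_add_card_filter_not (fun c => c.1 < n),
    filter_filter, filter_filter] at h
  rw [bottomRight, card_image_of_injOn (injOn_unshift n C), topRight]
  simpa only [not_lt, and_comm] using h

end BlockCounts

section BlockConfigs

variable {m n k : ℕ} {A B C : Board}

theorem topLeft_mem_rookConfigs (hC : C ∈ rookConfigs (blockSharp n m B A) k) :
    topLeft n C ∈ rookConfigs B #(topLeft n C) :=
  filter_mem_rookConfigs hC fun _ hc h =>
    mem_of_mem_blockSharp_of_lt ((mem_rookConfigs.1 hC).1 hc) h.1 h.2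

theorem bottomRight_mem_rookConfigs (hB : B ⊆ grid n n)
    (hC : C ∈ rookConfigs (blockSharp n m B A) k) :
    bottomRight n C ∈ rookConfigs A #(bottomRight n C) := by
  obtain ⟨hsub, -, hfst, hsnd⟩ := mem_rookConfigs.1 hC
  rw [mem_rookConfigs, bottomRight, coe_image]
  refine ⟨fun a ha => ?_, rfl, Set.InjOn.image_of_comp fun a ha b hb h => ?_,
    Set.InjOn.image_of_comp fun a ha b hb h => ?_⟩
  · obtain ⟨c, hc, rfl⟩ := mem_image.1 ha
    obtain ⟨hcC, h1, h2⟩ := mem_filter.1 hc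
    exact mem_of_mem_blockSharp_of_le hB (hsub hcC) h1 h2
  all_goals
    obtain ⟨haC, ha1, ha2⟩ := mem_filter.1 ha
    obtain ⟨hbC, hb1, hb2⟩ := mem_filter.1 hb
    simp only [Function.comp] at h
  · exact hfst haC hbC (by omega)
  · exact hsnd haC hbC (by omega)

theorem topRight_mem_rookConfigs (hA : A ⊆ grid m m) (hB : B ⊆ grid n n)
    (hC : C ∈ rookConfigs (blockSharp n m B A) k) :
    topRight n C ∈ rookConfigs (topRightBoard m n (bottomRight n C) (topLeft n C))
      #(topRight n C) := by
  obtain ⟨hsub, -, hfst, hsnd⟩ := mem_rookConfigs.1 hC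
  refine filter_mem_rookConfigs hC fun t ht ⟨h1, h2⟩ => ?_
  have := mem_grid.1 (blockSharp_subset_grid hA hB (hsub ht))
  refine mem_product.2 ⟨mem_freeRows.2 ⟨h1, fun c hc hct => ?_⟩,
    mem_image.2 ⟨t.2 - n, mem_freeCols.2 ⟨by omega, fun a ha hat => ?_⟩, by omega⟩⟩
  · obtain ⟨hcC, -, hc2⟩ := mem_filter.1 hc
    rw [hfst hcC ht hct] at hc2
    omega
  · obtain ⟨c, hc, rfl⟩ := mem_image.1 ha
    obtain ⟨hcC, hc1, hc2⟩ := mem_filter.1 hc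
    rw [hsnd hcC ht (by dsimp only at hat; omega)] at hc1
    omega

theorem bottomLeft_mem_rookConfigs (hA : A ⊆ grid m m) (hB : B ⊆ grid n n)
    (hC : C ∈ rookConfigs (blockSharp n m B A) k) :
    bottomLeft n C ∈ rookConfigs (bottomLeftBoard m n (bottomRight n C) (topLeft n C))
      #(bottomLeft n C) := by
  obtain ⟨hsub, -, hfst, hsnd⟩ := mem_rookConfigs.1 hC
  refine filter_mem_rookConfigs hC fun b hb ⟨h1, h2⟩ => ?_
  have := mem_grid.1 (blockSharp_subset_grid hA hB (hsub hb))
  refine mem_product.2 ⟨mem_image.2 ⟨b.1 - n, mem_freeRows.2 ⟨by omega, fun a ha hab => ?_⟩,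
    by omega⟩, mem_freeCols.2 ⟨h2, fun c hc hcb => ?_⟩⟩
  · obtain ⟨c, hc, rfl⟩ := mem_image.1 ha
    obtain ⟨hcC, hc1, hc2⟩ := mem_filter.1 hc
    rw [hfst hcC hb (by dsimp only at hab; omega)] at hc2
    omega
  · obtain ⟨hcC, hc1, -⟩ := mem_filter.1 hc
    rw [hsnd hcC hb hcb] at hc1
    omega

end BlockConfigs

def blockUnion (n : ℕ) (CA CB MTR MBL : Board) : Board := (CB ∪ MTR) ∪ (MBL ∪ shiftBoard n CA)

theorem blockUnion_blocks (n : ℕ) (C : Board) :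
    blockUnion n (bottomRight n C) (topLeft n C) (topRight n C) (bottomLeft n C) = C := by
  rw [blockUnion, shiftBoard_bottomRight, topLeft, topRight, bottomLeft, filter_union_right,
    filter_union_right, filter_union_right]
  exact filter_true_of_mem fun c _ => by omega

theorem card_range_union_image_add (m n : ℕ) : #(range n ∪ (range m).image (· + n)) = m + n := by
  rw [card_union_of_disjoint (disjoint_left.2 fun r hr hr' => by
      obtain ⟨a, -, rfl⟩ := mem_image.1 hr'
      exact absurd (mem_range.1 hr) (by omega)),
    card_image_of_injective _ (add_left_injective n), card_range, card_range, add_comm]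

section BijectionImages

variable {m n i : ℕ} {CA CB MTR MBL : Board}

theorem image_fst_of_mem_topRightBoard (hCB : CB ∈ rookConfigs (grid n n) (n - i)) (hin : i ≤ n)
    (hTR : MTR ∈ rookConfigs (topRightBoard m n CA CB) i) : MTR.image Prod.fst = freeRows n CB :=
  image_fst_eq_of_mem_rookConfigs (by rwa [card_freeRows_of_mem_rookConfigs hCB hin])

theorem image_snd_of_mem_topRightBoard (hCA : CA ∈ rookConfigs (grid m m) (m - i)) (him : i ≤ m)
    (hTR : MTR ∈ rookConfigs (topRightBoard m n CA CB) i) :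
    MTR.image Prod.snd = (freeCols m CA).image (· + n) :=
  image_snd_eq_of_mem_rookConfigs (by
    rwa [card_image_of_injective _ (add_left_injective n),
      card_freeCols_of_mem_rookConfigs hCA him])

theorem image_fst_of_mem_bottomLeftBoard (hCA : CA ∈ rookConfigs (grid m m) (m - i)) (him : i ≤ m)
    (hBL : MBL ∈ rookConfigs (bottomLeftBoard m n CA CB) i) :
    MBL.image Prod.fst = (freeRows m CA).image (· + n) :=
  image_fst_eq_of_mem_rookConfigs (by
    rwa [card_image_of_injective _ (add_left_injective n),
      card_freeRows_of_mem_rookConfigs hCA him])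

theorem image_snd_of_mem_bottomLeftBoard (hCB : CB ∈ rookConfigs (grid n n) (n - i)) (hin : i ≤ n)
    (hBL : MBL ∈ rookConfigs (bottomLeftBoard m n CA CB) i) : MBL.image Prod.snd = freeCols n CB :=
  image_snd_eq_of_mem_rookConfigs (by rwa [card_freeCols_of_mem_rookConfigs hCB hin])

end BijectionImages

section CrossTerms

variable {m n i : ℕ} {CA CB MTR MBL : Board}

theorem nePairs_topLeft_topRight (hCB : CB ∈ rookConfigs (grid n n) (n - i)) (hin : i ≤ n)
    (hTR : MTR ∈ rookConfigs (topRightBoard m n CA CB) i) :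
    nePairs CB MTR = ∑ r ∈ freeRows n CB, ∑ c ∈ CB, if r < c.1 then 1 else 0 := by
  obtain ⟨hTRsub, -, hTRfst, -⟩ := mem_rookConfigs.1 hTR
  rw [nePairs_of_forall_snd_lt fun c hc t ht =>
      (mem_grid.1 ((mem_rookConfigs.1 hCB).1 hc)).2.trans_le (lt_of_mem_topRightBoard (hTRsub ht)).2.1,
    sum_comm,
    ← image_fst_of_mem_topRightBoard hCB hin hTR, sum_image hTRfst]

theorem nePairs_bottomLeft_topLeft (hCB : CB ∈ rookConfigs (grid n n) (n - i)) (hin : i ≤ n)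
    (hBL : MBL ∈ rookConfigs (bottomLeftBoard m n CA CB) i) :
    nePairs MBL CB = ∑ c ∈ CB, ∑ s ∈ freeCols n CB, if s < c.2 then 1 else 0 := by
  obtain ⟨hBLsub, -, -, hBLsnd⟩ := mem_rookConfigs.1 hBL
  rw [nePairs_of_forall_fst_lt fun b hb c hc =>
      (mem_grid.1 ((mem_rookConfigs.1 hCB).1 hc)).1.trans_le (lt_of_mem_bottomLeftBoard (hBLsub hb)).1,
    sum_comm,
    ← image_snd_of_mem_bottomLeftBoard hCB hin hBL]
  exact sum_congr rfl fun c _ => (sum_image (f := fun s => if s < c.2 then 1 else 0) hBLsnd).symm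

theorem nePairs_bottomLeft_shiftBoard (hCA : CA ∈ rookConfigs (grid m m) (m - i)) (him : i ≤ m)
    (hBL : MBL ∈ rookConfigs (bottomLeftBoard m n CA CB) i) :
    nePairs MBL (shiftBoard n CA) = ∑ r ∈ freeRows m CA, ∑ a ∈ CA, if a.1 < r then 1 else 0 := by
  obtain ⟨hBLsub, -, hBLfst, -⟩ := mem_rookConfigs.1 hBL
  rw [nePairs_of_forall_snd_lt fun b hb a ha => (lt_of_mem_bottomLeftBoard (hBLsub hb)).2.2.trans_le
      (le_of_mem_shiftBoard ha).2, shiftBoard,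
    sum_congr rfl fun b _ => sum_image (injective_shift n).injOn,
    ← sum_image (f := fun r => ∑ a ∈ CA, if a.1 + n < r then 1 else 0) hBLfst,
    image_fst_of_mem_bottomLeftBoard hCA him hBL, sum_image (add_left_injective n).injOn]
  simp only [Nat.add_lt_add_iff_right]

theorem nePairs_shiftBoard_topRight (hCA : CA ∈ rookConfigs (grid m m) (m - i)) (him : i ≤ m)
    (hTR : MTR ∈ rookConfigs (topRightBoard m n CA CB) i) :
    nePairs (shiftBoard n CA) MTR = ∑ a ∈ CA, ∑ s ∈ freeCols m CA, if a.2 < s then 1 else 0 := by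
  obtain ⟨hTRsub, -, -, hTRsnd⟩ := mem_rookConfigs.1 hTR
  rw [nePairs_of_forall_fst_lt fun a ha t ht => (lt_of_mem_topRightBoard (hTRsub ht)).1.trans_le
      (le_of_mem_shiftBoard ha).1, shiftBoard, sum_image (injective_shift n).injOn]
  refine sum_congr rfl fun a _ => ?_
  rw [← sum_image (f := fun s => if a.2 + n < s then 1 else 0) hTRsnd,
    image_snd_of_mem_topRightBoard hCA him hTR, sum_image (add_left_injective n).injOn]
  simp only [Nat.add_lt_add_iff_right]

theorem nePairs_bottomLeft_topRight (hTR : MTR ∈ rookConfigs (topRightBoard m n CA CB) i)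
    (hBL : MBL ∈ rookConfigs (bottomLeftBoard m n CA CB) i) : nePairs MBL MTR = i * i := by
  obtain ⟨hTRsub, hTRcard, -, -⟩ := mem_rookConfigs.1 hTR
  obtain ⟨hBLsub, hBLcard, -, -⟩ := mem_rookConfigs.1 hBL
  rw [nePairs_eq_card_mul fun b hb t ht =>
    have ht' := lt_of_mem_topRightBoard (hTRsub ht)
    have hb' := lt_of_mem_bottomLeftBoard (hBLsub hb)
    ⟨ht'.1.trans_le hb'.1, hb'.2.2.trans_le ht'.2.1⟩, hTRcard, hBLcard]

end CrossTerms

section BlockPositions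

variable {m n : ℕ} {CA CB MTR MBL : Board} (hCB : ∀ c ∈ CB, c.1 < n ∧ c.2 < n)
  (hTR : ∀ c ∈ MTR, c.1 < n ∧ n ≤ c.2) (hBL : ∀ c ∈ MBL, n ≤ c.1 ∧ c.2 < n)
include hCB hTR hBL

theorem disjoint_blockUnion_parts :
    Disjoint CB MTR ∧ Disjoint MBL (shiftBoard n CA) ∧
      Disjoint (CB ∪ MTR) (MBL ∪ shiftBoard n CA) := by
  refine ⟨disjoint_left.2 fun c h h' => ?_, disjoint_left.2 fun c h h' => ?_,
    disjoint_left.2 fun c h h' => ?_⟩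
  · have := hCB c h; have := hTR c h'; omega
  · have := hBL c h; have := le_of_mem_shiftBoard h'; omega
  · rw [mem_union] at h h'
    rcases h with h | h <;> rcases h' with h' | h' <;>
      (first | have := hCB c h | have := hTR c h) <;>
      (first | have := hBL c h' | have := le_of_mem_shiftBoard h') <;> omega

theorem nePairs_blockUnion_eq_sum :
    nePairs (blockUnion n CA CB MTR MBL) (blockUnion n CA CB MTR MBL) =
      nePairs CB CB + nePairs CB MTR + nePairs MTR MTR + nePairs MBL CB + nePairs MBL MTR
        + nePairs (shiftBoard n CA) MTR + nePairs MBL MBL + nePairs MBL (shiftBoard n CA)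
        + nePairs (shiftBoard n CA) (shiftBoard n CA) := by
  obtain ⟨hT, hU, hTU⟩ := disjoint_blockUnion_parts (CA := CA) hCB hTR hBL
  simp only [blockUnion, nePairs_union_left hTU, nePairs_union_right _ hTU, nePairs_union_left hT,
    nePairs_union_right _ hT, nePairs_union_left hU, nePairs_union_right _ hU]
  rw [nePairs_eq_zero (X := CB) (Y := MBL), nePairs_eq_zero (X := CB) (Y := shiftBoard n CA),
    nePairs_eq_zero (X := MTR) (Y := MBL), nePairs_eq_zero (X := MTR) (Y := shiftBoard n CA),
    nePairs_eq_zero (X := MTR) (Y := CB), nePairs_eq_zero (X := shiftBoard n CA) (Y := CB),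
    nePairs_eq_zero (X := shiftBoard n CA) (Y := MBL)]
  · ring
  all_goals
    intro x hx y hy
    first | have := hCB x hx | have := hTR x hx | have := hBL x hx | have := le_of_mem_shiftBoard hx
    first | have := hCB y hy | have := hTR y hy | have := hBL y hy | have := le_of_mem_shiftBoard hy
    omega

theorem topLeft_blockUnion : topLeft n (blockUnion n CA CB MTR MBL) = CB := by
  rw [topLeft, blockUnion, filter_union, filter_union, filter_union, filter_true_of_mem hCB,
    filter_false_of_mem fun c hc => by have := hTR c hc; omega,
    filter_false_of_mem fun c hc => by have := hBL c hc; omega,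
    filter_false_of_mem fun c hc => by have := le_of_mem_shiftBoard hc; omega]
  simp

theorem topRight_blockUnion : topRight n (blockUnion n CA CB MTR MBL) = MTR := by
  rw [topRight, blockUnion, filter_union, filter_union, filter_union, filter_true_of_mem hTR,
    filter_false_of_mem fun c hc => by have := hCB c hc; omega,
    filter_false_of_mem fun c hc => by have := hBL c hc; omega,
    filter_false_of_mem fun c hc => by have := le_of_mem_shiftBoard hc; omega]
  simp

theorem bottomLeft_blockUnion : bottomLeft n (blockUnion n CA CB MTR MBL) = MBL := by
  rw [bottomLeft, blockUnion, filter_union, filter_union, filter_union, filter_true_of_mem hBL,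
    filter_false_of_mem fun c hc => by have := hCB c hc; omega,
    filter_false_of_mem fun c hc => by have := hTR c hc; omega,
    filter_false_of_mem fun c hc => by have := le_of_mem_shiftBoard hc; omega]
  simp

theorem bottomRight_blockUnion : bottomRight n (blockUnion n CA CB MTR MBL) = CA := by
  rw [bottomRight, blockUnion, filter_union, filter_union, filter_union,
    filter_true_of_mem fun c hc => le_of_mem_shiftBoard hc,
    filter_false_of_mem fun c hc => by have := hCB c hc; omega,
    filter_false_of_mem fun c hc => by have := hTR c hc; omega,
    filter_false_of_mem fun c hc => by have := hBL c hc; omega, empty_union, empty_union,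
    empty_union, shiftBoard, image_image]
  exact (image_congr fun c _ => by simp).trans image_id

end BlockPositions

section Assembled

variable {m n i : ℕ} {CA CB MTR MBL : Board} (hCA : CA ∈ rookConfigs (grid m m) (m - i))
  (hCB : CB ∈ rookConfigs (grid n n) (n - i)) (hTR : MTR ∈ rookConfigs (topRightBoard m n CA CB) i)
  (hBL : MBL ∈ rookConfigs (bottomLeftBoard m n CA CB) i) (him : i ≤ m) (hin : i ≤ n)
include hCA hCB hTR hBL him hin

theorem image_fst_blockUnion :
    (blockUnion n CA CB MTR MBL).image Prod.fst = range n ∪ (range m).image (· + n) := by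
  have hshift : (shiftBoard n CA).image Prod.fst = (CA.image Prod.fst).image (· + n) := by
    simp only [shiftBoard, image_image]
    rfl
  rw [blockUnion, image_union, image_union, image_union, image_fst_of_mem_topRightBoard hCB hin hTR,
    image_fst_of_mem_bottomLeftBoard hCA him hBL, hshift, ← image_union, union_comm (CB.image _),
    freeRows_union_image_fst (mem_rookConfigs.1 hCB).1,
    freeRows_union_image_fst (mem_rookConfigs.1 hCA).1]

theorem image_snd_blockUnion :
    (blockUnion n CA CB MTR MBL).image Prod.snd = range n ∪ (range m).image (· + n) := by
  have hshift : (shiftBoard n CA).image Prod.snd = (CA.image Prod.snd).image (· + n) := by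
    simp only [shiftBoard, image_image]
    rfl
  rw [blockUnion, image_union, image_union, image_union, image_snd_of_mem_topRightBoard hCA him hTR,
    image_snd_of_mem_bottomLeftBoard hCB hin hBL, hshift, union_union_union_comm, ← image_union,
    union_comm (CB.image _),
    freeCols_union_image_snd (mem_rookConfigs.1 hCB).1,
    freeCols_union_image_snd (mem_rookConfigs.1 hCA).1]

theorem nePairs_blockUnion_add :
    nePairs (blockUnion n CA CB MTR MBL) (blockUnion n CA CB MTR MBL) + i * i =
      invStat m m CA + invStat n n (rot180 n n CB) + nePairs MTR MTR + nePairs MBL MBL := by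
  obtain ⟨hCAg, -, hCAfst, hCAsnd⟩ := mem_rookConfigs.1 hCA
  obtain ⟨hCBg, -, hCBfst, hCBsnd⟩ := mem_rookConfigs.1 hCB
  obtain ⟨hCB', hTR', hBL'⟩ := positions_of_subset_blocks hCBg (mem_rookConfigs.1 hTR).1
    (mem_rookConfigs.1 hBL).1
  rw [nePairs_blockUnion_eq_sum hCB' hTR' hBL', nePairs_topLeft_topRight hCB hin hTR,
    nePairs_bottomLeft_topLeft hCB hin hBL, nePairs_bottomLeft_shiftBoard hCA him hBL,
    nePairs_shiftBoard_topRight hCA him hTR, nePairs_bottomLeft_topRight hTR hBL,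
    nePairs_shiftBoard, invStat_eq_cornerCount, invStat_rot180 hCBg,
    cornerCount_eq _ hCAg hCAfst hCAsnd, cornerCount_eq _ hCBg hCBfst hCBsnd,
    card_freeRows_of_mem_rookConfigs hCA him, card_freeCols_of_mem_rookConfigs hCA him,
    card_freeRows_of_mem_rookConfigs hCB hin, card_freeCols_of_mem_rookConfigs hCB hin]
  unfold nePairs
  rw [sum_comm (s := CB)]
  ring

end Assembled

section Decomposition

variable {m n i : ℕ} {A B CA CB MTR MBL : Board} (hA : A ⊆ grid m m) (hB : B ⊆ grid n n)
include hA hB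

theorem blockUnion_mem_rookConfigs (hCA : CA ∈ rookConfigs A (m - i))
    (hCB : CB ∈ rookConfigs B (n - i)) (hTR : MTR ∈ rookConfigs (topRightBoard m n CA CB) i)
    (hBL : MBL ∈ rookConfigs (bottomLeftBoard m n CA CB) i) (him : i ≤ m) (hin : i ≤ n) :
    blockUnion n CA CB MTR MBL ∈ rookConfigs (blockSharp n m B A) (m + n) := by
  have hCA' := rookConfigs_mono hA _ hCA
  have hCB' := rookConfigs_mono hB _ hCB
  obtain ⟨hCAsub, hCAcard, -, -⟩ := mem_rookConfigs.1 hCA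
  obtain ⟨hCBsub, hCBcard, -, -⟩ := mem_rookConfigs.1 hCB
  obtain ⟨hTRsub, hTRcard, -, -⟩ := mem_rookConfigs.1 hTR
  obtain ⟨hBLsub, hBLcard, -, -⟩ := mem_rookConfigs.1 hBL
  obtain ⟨hCBpos, hTRpos, hBLpos⟩ := positions_of_subset_blocks (hCBsub.trans hB) hTRsub hBLsub
  obtain ⟨hT, hU, hTU⟩ := disjoint_blockUnion_parts (CA := CA) hCBpos hTRpos hBLpos
  have hcard : #(blockUnion n CA CB MTR MBL) = m + n := by
    rw [blockUnion, card_union_of_disjoint hTU, card_union_of_disjoint hT,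
      card_union_of_disjoint hU, shiftBoard, card_image_of_injective _ (injective_shift n), hCAcard,
      hCBcard, hTRcard, hBLcard]
    omega
  refine mem_rookConfigs.2 ⟨fun c hc => mem_blockSharp.2 ?_, hcard, card_image_iff.1 ?_,
    card_image_iff.1 ?_⟩
  · rcases mem_union.1 hc with h | h <;> rcases mem_union.1 h with h | h
    · exact Or.inl (hCBsub h)
    · exact Or.inr (Or.inl (lt_of_mem_topRightBoard (hTRsub h)))
    · exact Or.inr (Or.inr (Or.inl (lt_of_mem_bottomLeftBoard (hBLsub h))))
    · exact Or.inr (Or.inr (Or.inr (image_subset_image hCAsub h)))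
  · rw [image_fst_blockUnion hCA' hCB' hTR hBL him hin, card_range_union_image_add, hcard]
  · rw [image_snd_blockUnion hCA' hCB' hTR hBL him hin, card_range_union_image_add, hcard]

theorem sum_rookConfigs_blockSharp_filter {M : Type*} [AddCommMonoid M] (him : i ≤ m)
    (hin : i ≤ n) (f : Board → M) :
    ∑ C ∈ rookConfigs (blockSharp n m B A) (m + n) with #(topRight n C) = i, f C =
      ∑ x ∈ (rookConfigs A (m - i) ×ˢ rookConfigs B (n - i)).sigma (fun P =>
          rookConfigs (topRightBoard m n P.1 P.2) i ×ˢ rookConfigs (bottomLeftBoard m n P.1 P.2) i),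
        f (blockUnion n x.1.1 x.1.2 x.2.1 x.2.2) := by
  refine sum_nbij' (fun C => ⟨(bottomRight n C, topLeft n C), (topRight n C, bottomLeft n C)⟩)
    (fun x => blockUnion n x.1.1 x.1.2 x.2.1 x.2.2) (fun C hC => ?_) ?_
    (fun C _ => blockUnion_blocks n C) ?_ (fun C _ => by rw [blockUnion_blocks])
  · obtain ⟨hC, hi⟩ := mem_filter.1 hC
    have h1 := card_topLeft_add_card_topRight hA hB hC
    have h2 := card_topLeft_add_card_bottomLeft hA hB hC
    have h3 := card_topRight_add_card_bottomRight hA hB hC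
    have hTL := topLeft_mem_rookConfigs hC
    have hBR := bottomRight_mem_rookConfigs hB hC
    have hTR := topRight_mem_rookConfigs hA hB hC
    have hBL := bottomLeft_mem_rookConfigs hA hB hC
    rw [show #(topLeft n C) = n - i by omega] at hTL
    rw [show #(bottomRight n C) = m - i by omega] at hBR
    rw [hi] at hTR
    rw [show #(bottomLeft n C) = i by omega] at hBL
    exact mem_sigma.2 ⟨mem_product.2 ⟨hBR, hTL⟩, mem_product.2 ⟨hTR, hBL⟩⟩
  all_goals
    rintro ⟨⟨CA, CB⟩, MTR, MBL⟩ hx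
    obtain ⟨hP, hM⟩ := mem_sigma.1 hx
    obtain ⟨hCA, hCB⟩ := mem_product.1 hP
    obtain ⟨hTR, hBL⟩ := mem_product.1 hM
    obtain ⟨hCBpos, hTRpos, hBLpos⟩ := positions_of_subset_blocks
      ((mem_rookConfigs.1 hCB).1.trans hB) (mem_rookConfigs.1 hTR).1 (mem_rookConfigs.1 hBL).1
  · refine mem_filter.2 ⟨blockUnion_mem_rookConfigs hA hB hCA hCB hTR hBL him hin, ?_⟩
    rw [topRight_blockUnion hCBpos hTRpos hBLpos]
    exact (mem_rookConfigs.1 hTR).2.1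
  · show (⟨(_, _), (_, _)⟩ : Σ _ : Board × Board, Board × Board) = ⟨(CA, CB), (MTR, MBL)⟩
    rw [topLeft_blockUnion hCBpos hTRpos hBLpos, topRight_blockUnion hCBpos hTRpos hBLpos,
      bottomLeft_blockUnion hCBpos hTRpos hBLpos, bottomRight_blockUnion hCBpos hTRpos hBLpos]

end Decomposition

theorem zpow_invStat_blockUnion {K : Type*} [Field K] {q : K} (hq : q ≠ 0) {m n i : ℕ}
    {CA CB MTR MBL : Board} (hCA : CA ∈ rookConfigs (grid m m) (m - i))
    (hCB : CB ∈ rookConfigs (grid n n) (n - i))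
    (hTR : MTR ∈ rookConfigs (topRightBoard m n CA CB) i)
    (hBL : MBL ∈ rookConfigs (bottomLeftBoard m n CA CB) i) (him : i ≤ m) (hin : i ≤ n) :
    q ^ invStat (m + n) (m + n) (blockUnion n CA CB MTR MBL) =
      q ^ invStat m m CA * q ^ invStat n n (rot180 n n CB) * q ^ (-(i : ℤ) ^ 2) *
        (q ^ nePairs MTR MTR * q ^ nePairs MBL MBL) := by
  have hfull := rookConfigs_mono (blockSharp_subset_grid subset_rfl subset_rfl) _
    (blockUnion_mem_rookConfigs subset_rfl subset_rfl hCA hCB hTR hBL him hin)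
  have h := nePairs_blockUnion_add hCA hCB hTR hBL him hin
  rw [← invStat_eq_nePairs hfull] at h
  have hz : (invStat (m + n) (m + n) (blockUnion n CA CB MTR MBL) : ℤ) =
      invStat m m CA + invStat n n (rot180 n n CB) + -(i : ℤ) ^ 2 +
        (nePairs MTR MTR + nePairs MBL MBL) := by
    have h' := congrArg (Nat.cast : ℕ → ℤ) h
    push_cast at h'
    linear_combination h'
  simp only [← zpow_natCast, hz, zpow_add₀ hq]

theorem sum_zpow_invStat_blockUnion {K : Type*} [Field K] {q : K} (hq : q ≠ 0) {m n i : ℕ}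
    {CA CB : Board} (hCA : CA ∈ rookConfigs (grid m m) (m - i))
    (hCB : CB ∈ rookConfigs (grid n n) (n - i)) (him : i ≤ m) (hin : i ≤ n) :
    ∑ y ∈ rookConfigs (topRightBoard m n CA CB) i ×ˢ rookConfigs (bottomLeftBoard m n CA CB) i,
        q ^ invStat (m + n) (m + n) (blockUnion n CA CB y.1 y.2) =
      q ^ invStat m m CA * q ^ invStat n n (rot180 n n CB) * qFact q i ^ 2 *
        q ^ (-(i : ℤ) ^ 2) := by
  have hR := card_freeRows_of_mem_rookConfigs hCB hin
  have hS : #((freeCols m CA).image (· + n)) = i := by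
    rw [card_image_of_injective _ (add_left_injective n), card_freeCols_of_mem_rookConfigs hCA him]
  have hR' : #((freeRows m CA).image (· + n)) = i := by
    rw [card_image_of_injective _ (add_left_injective n), card_freeRows_of_mem_rookConfigs hCA him]
  have hS' := card_freeCols_of_mem_rookConfigs hCB hin
  have hTRsum : ∑ M ∈ rookConfigs (topRightBoard m n CA CB) i, q ^ nePairs M M = qFact q i := by
    have := sum_pow_nePairs_rookConfigs_product q (hS.trans hR.symm)
    rwa [hR] at this
  have hBLsum : ∑ M ∈ rookConfigs (bottomLeftBoard m n CA CB) i, q ^ nePairs M M = qFact q i := by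
    have := sum_pow_nePairs_rookConfigs_product q (hS'.trans hR'.symm)
    rwa [hR'] at this
  rw [sum_product]
  calc _ = ∑ MTR ∈ rookConfigs (topRightBoard m n CA CB) i,
        ∑ MBL ∈ rookConfigs (bottomLeftBoard m n CA CB) i,
          q ^ invStat m m CA * q ^ invStat n n (rot180 n n CB) * q ^ (-(i : ℤ) ^ 2) *
            (q ^ nePairs MTR MTR * q ^ nePairs MBL MBL) :=
        sum_congr rfl fun MTR hTR => sum_congr rfl fun MBL hBL =>
          zpow_invStat_blockUnion hq hCA hCB hTR hBL him hin
    _ = q ^ invStat m m CA * q ^ invStat n n (rot180 n n CB) * q ^ (-(i : ℤ) ^ 2) *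
          ((∑ M ∈ rookConfigs (topRightBoard m n CA CB) i, q ^ nePairs M M) *
            ∑ M ∈ rookConfigs (bottomLeftBoard m n CA CB) i, q ^ nePairs M M) := by
        rw [sum_mul_sum, mul_sum]
        simp only [mul_sum]
    _ = _ := by rw [hTRsum, hBLsum]; ring

theorem qRook_blockSharp_of_ne_zero {K : Type*} [Field K] {q : K} (hq : q ≠ 0) {m n : ℕ}
    {A B : Board} (hA : A ⊆ grid m m) (hB : B ⊆ grid n n) :
    qRook q (m + n) (m + n) (blockSharp n m B A) (m + n) =
      ∑ i ∈ range (min m n + 1),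
        qRook q m m A (m - i) * qRook q n n (rot180 n n B) (n - i) * qFact q i ^ 2 *
          q ^ (-(i : ℤ) ^ 2) := by
  have hmaps : ∀ C ∈ rookConfigs (blockSharp n m B A) (m + n),
      #(topRight n C) ∈ range (min m n + 1) := fun C hC => by
    have := card_topLeft_add_card_topRight hA hB hC
    have := card_topRight_add_card_bottomRight hA hB hC
    exact mem_range.2 (by omega)
  rw [qRook, ← sum_fiberwise_of_maps_to hmaps]
  refine sum_congr rfl fun i hi => ?_
  have him : i ≤ m := by have := mem_range.1 hi; omega
  have hin : i ≤ n := by have := mem_range.1 hi; omega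
  rw [sum_rookConfigs_blockSharp_filter hA hB him hin, sum_sigma, sum_product, qRook,
    qRook_rot180 q hB, sum_mul_sum]
  simp only [sum_mul]
  exact sum_congr rfl fun CA hCA => sum_congr rfl fun CB hCB =>
    sum_zpow_invStat_blockUnion hq (rookConfigs_mono hA _ hCA) (rookConfigs_mono hB _ hCB) him hin

end Rook

/-- For an `m × m` board `A` and an `n × n` board `B`,
`R_{m+n}^{B#A}(q) = Σ_{i=0}^{min(m,n)} R_{m-i}^A(q) · R_{n-i}^{B^↻}(q) · ([i]!_q)² · q^{-i²}`. -/
theorem qRook_blockSharp (m n : ℕ) (A B : Board) (hA : A ⊆ grid m m) (hB : B ⊆ grid n n) :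
    qRook (RatFunc.X : RatFunc ℚ) (m + n) (m + n) (blockSharp n m B A) (m + n) =
      ∑ i ∈ Finset.range (min m n + 1),
        qRook (RatFunc.X : RatFunc ℚ) m m A (m - i) *
          qRook (RatFunc.X : RatFunc ℚ) n n (rot180 n n B) (n - i) *
          qFact (RatFunc.X : RatFunc ℚ) i ^ 2 * (RatFunc.X : RatFunc ℚ) ^ (-(i : ℤ) ^ 2) :=
  Rook.qRook_blockSharp_of_ne_zero RatFunc.X_ne_zero hA hB
end
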